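/- arXiv:1911.09122 — 8 statements merged into one kernel-verified Lean document; each statement's English description precedes it below -/
import Mathlib

section
/- Let (Ω, P) be a probability space and let a₀, a₁, b₀, b₁ : Ω → ℝ be random variables, each taking values in the interval [0,1]. Then Cov(a₀,b₀) + Cov(a₀,b₁) + Cov(a₁,b₀) − Cov(a₁,b₁) ≤ 4/7. -/
/-!
Put `Bᵢ = bᵢ - E bᵢ`. The CHSH sum equals `Cov(a₀, b₀ + b₁) + Cov(a₁, b₀ - b₁)`, and for `a` with
values in `[0,1]` one has `Cov(a, W) = E[a (W - E W)] ≤ E (W - E W)⁺`. Since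
`(u + v)⁺ + (u - v)⁺ = max |u| |v| + u` and `E B₀ = 0`, the sum is at most `E max |B₀| |B₁|`.

The function `(x, y) ↦ max |x - E b₀| |y - E b₁|` is convex in each variable, so on the unit
square it lies below its bilinear interpolation from the four corners. The expectation of that
interpolation depends only on `p = E b₀`, `q = E b₁` and `r = E[b₀ b₁]`, and maximising it over the
feasible triples (those of a distribution on the corners) gives `4/7`, attained at
`(p, q, r) = (2/7, 3/7, 0)`.
-/

open MeasureTheory

/-- The covariance of two real random variables:
`Cov(X,Y) := E[(X − E[X])(Y − E[Y])]`. -/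
noncomputable def cov {Ω : Type*} [MeasurableSpace Ω] (μ : Measure Ω) (X Y : Ω → ℝ) : ℝ :=
  ∫ ω, (X ω - ∫ ω', X ω' ∂μ) * (Y ω - ∫ ω', Y ω' ∂μ) ∂μ

open ProbabilityTheory Set

lemma posPart_add_posPart_sub (u v : ℝ) : max (u + v) 0 + max (u - v) 0 = max |u| |v| + u := by
  rcases abs_cases u with ⟨hu, _⟩ | ⟨hu, _⟩ <;> rcases abs_cases v with ⟨hv, _⟩ | ⟨hv, _⟩ <;>
  simp only [hu, hv, max_def] <;> split_ifs <;> linarith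

lemma mul_le_posPart {a : ℝ} (ha : a ∈ Icc (0 : ℝ) 1) (w : ℝ) : a * w ≤ max w 0 :=
  calc a * w ≤ a * max w 0 := mul_le_mul_of_nonneg_left (le_max_left w 0) ha.1
    _ ≤ max w 0 := mul_le_of_le_one_left (le_max_right w 0) ha.2

lemma max_vertex_average_le {p q r : ℝ} (h00 : 0 ≤ 1 - p - q + r) (h10 : r ≤ p) (h01 : r ≤ q)
    (h11 : 0 ≤ r) :
    (1 - p - q + r) * max p q + (p - r) * max (1 - p) q + (q - r) * max p (1 - q)
      + r * max (1 - p) (1 - q) ≤ 4 / 7 := by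
  -- The weights are the corner masses of a law on `{0,1}²` with means `p`, `q` and `E[xy] = r`;
  -- the two reductions are the symmetries `(x, y) ↦ (y, x)` and `(x, y) ↦ (1 - x, 1 - y)`.
  wlog hpq : p ≤ q generalizing p q
  · have := this (q := p) (p := q) (by linarith) h01 h10 (by linarith)
    rw [max_comm q p, max_comm (1 - q) p, max_comm q (1 - p), max_comm (1 - q) (1 - p)] at this
    linarith
  wlog hs : p + q ≤ 1 generalizing p q r
  · have := this (p := 1 - q) (q := 1 - p) (r := 1 - p - q + r) (h00 := by linarith)
      (h10 := by linarith) (h01 := by linarith) (h11 := h00) (by linarith) (by linarith)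
    rw [sub_sub_cancel, sub_sub_cancel, max_comm q p, max_comm (1 - q) p,
      max_comm (1 - q) (1 - p), max_comm q (1 - p)] at this
    linarith
  rw [max_eq_right hpq, max_eq_left (by linarith : q ≤ 1 - p),
    max_eq_right (by linarith : p ≤ 1 - q), max_eq_left (by linarith : 1 - q ≤ 1 - p)]
  -- Now the left side is affine in `r` with slope `2q - 1`.
  rcases le_total q (1 / 2) with hq | hq
  · nlinarith [sq_nonneg (7 * p - 2), sq_nonneg (7 * q - 3), sq_nonneg (7 * p + 7 * q - 5),
      mul_nonneg h11 (by linarith : (0:ℝ) ≤ 1 - 2 * q)]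
  · nlinarith [sq_nonneg (7 * p - 2), sq_nonneg (7 * q - 4), sq_nonneg (7 * p - 7 * q + 2),
      mul_nonneg (sub_nonneg.2 h10) (by linarith : (0:ℝ) ≤ 2 * q - 1)]

lemma ConvexOn.le_of_mem_unitInterval {f : ℝ → ℝ} (hf : ConvexOn ℝ (Icc 0 1) f) {t : ℝ}
    (ht : t ∈ Icc (0 : ℝ) 1) : f t ≤ (1 - t) * f 0 + t * f 1 := by
  simpa using hf.2 (left_mem_Icc.2 zero_le_one) (right_mem_Icc.2 zero_le_one) (sub_nonneg.2 ht.2)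
    ht.1 (by ring)

def bilinearInterp (c₀₀ c₁₀ c₀₁ c₁₁ x y : ℝ) : ℝ :=
  (1 - x) * (1 - y) * c₀₀ + x * (1 - y) * c₁₀ + (1 - x) * y * c₀₁ + x * y * c₁₁

lemma bilinearInterp_eq (c₀₀ c₁₀ c₀₁ c₁₁ x y : ℝ) :
    bilinearInterp c₀₀ c₁₀ c₀₁ c₁₁ x y
      = c₀₀ + (c₁₀ - c₀₀) * x + (c₀₁ - c₀₀) * y + (c₀₀ - c₁₀ - c₀₁ + c₁₁) * (x * y) := by
  unfold bilinearInterp; ring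

lemma le_bilinearInterp_of_convexOn {f : ℝ → ℝ → ℝ} {x y : ℝ}
    (hf₀ : ConvexOn ℝ (Icc 0 1) (f · 0)) (hf₁ : ConvexOn ℝ (Icc 0 1) (f · 1))
    (hfx : ConvexOn ℝ (Icc 0 1) (f x)) (hx : x ∈ Icc (0 : ℝ) 1) (hy : y ∈ Icc (0 : ℝ) 1) :
    f x y ≤ bilinearInterp (f 0 0) (f 1 0) (f 0 1) (f 1 1) x y := by
  have h₀ := mul_le_mul_of_nonneg_left (hf₀.le_of_mem_unitInterval hx) (sub_nonneg.2 hy.2)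
  have h₁ := mul_le_mul_of_nonneg_left (hf₁.le_of_mem_unitInterval hx) hy.1
  unfold bilinearInterp
  linarith [hfx.le_of_mem_unitInterval hy]

section

variable {Ω : Type*} [MeasurableSpace Ω] {μ : Measure Ω}

lemma cov_eq_covariance (X Y : Ω → ℝ) : cov μ X Y = cov[X, Y; μ] := rfl

lemma memLp_of_forall_mem_Icc [IsFiniteMeasure μ] {X : Ω → ℝ} (hX : Measurable X)
    (h : ∀ ω, X ω ∈ Icc (0 : ℝ) 1) (p : ENNReal) : MemLp X p μ :=
  .of_bound hX.aestronglyMeasurable 1 <| ae_of_all _ fun ω ↦ by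
    rw [Real.norm_eq_abs, abs_le]; constructor <;> linarith [(h ω).1, (h ω).2]

lemma integral_sub_integral [IsProbabilityMeasure μ] {X : Ω → ℝ} (hX : Integrable X μ) :
    ∫ ω, (X ω - μ[X]) ∂μ = 0 := by
  simp [integral_sub hX (integrable_const _)]

lemma integrable_bilinearInterp [IsFiniteMeasure μ] {X Y : Ω → ℝ} (hX : Integrable X μ)
    (hY : Integrable Y μ) (hXY : Integrable (X * Y) μ) (c₀₀ c₁₀ c₀₁ c₁₁ : ℝ) :
    Integrable (fun ω ↦ bilinearInterp c₀₀ c₁₀ c₀₁ c₁₁ (X ω) (Y ω)) μ := by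
  simp_rw [bilinearInterp_eq, ← Pi.mul_apply X Y]
  fun_prop

lemma integral_bilinearInterp [IsProbabilityMeasure μ] {X Y : Ω → ℝ} (hX : Integrable X μ)
    (hY : Integrable Y μ) (hXY : Integrable (X * Y) μ) (c₀₀ c₁₀ c₀₁ c₁₁ : ℝ) :
    ∫ ω, bilinearInterp c₀₀ c₁₀ c₀₁ c₁₁ (X ω) (Y ω) ∂μ
      = (1 - μ[X] - μ[Y] + μ[X * Y]) * c₀₀ + (μ[X] - μ[X * Y]) * c₁₀
        + (μ[Y] - μ[X * Y]) * c₀₁ + μ[X * Y] * c₁₁ := by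
  simp_rw [bilinearInterp_eq, ← Pi.mul_apply X Y]
  rw [integral_add, integral_add, integral_add, integral_const, integral_const_mul,
    integral_const_mul, integral_const_mul]
  · simp only [probReal_univ, smul_eq_mul, one_mul, Pi.mul_apply]; ring
  all_goals fun_prop

lemma covariance_le_integral_posPart [IsProbabilityMeasure μ] {A W : Ω → ℝ} (hA : Measurable A)
    (hA01 : ∀ ω, A ω ∈ Icc (0 : ℝ) 1) (hW : MemLp W 2 μ) :
    cov[A, W; μ] ≤ ∫ ω, max (W ω - μ[W]) 0 ∂μ := by
  have hV : Integrable (fun ω ↦ W ω - μ[W]) μ :=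
    (hW.integrable one_le_two).sub (integrable_const _)
  calc cov[A, W; μ] = ∫ ω, (A ω - μ[A]) * (W ω - μ[W]) ∂μ := rfl
    _ ≤ ∫ ω, (max (W ω - μ[W]) 0 - μ[A] * (W ω - μ[W])) ∂μ := by
      refine integral_mono ?_ (hV.pos_part.sub (hV.const_mul _)) fun ω ↦ ?_
      · exact ((memLp_of_forall_mem_Icc hA hA01 2).sub (memLp_const _)).integrable_mul
          (hW.sub (memLp_const _))
      · linarith [mul_le_posPart (hA01 ω) (W ω - μ[W])]
    _ = ∫ ω, max (W ω - μ[W]) 0 ∂μ := by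
      rw [integral_sub hV.pos_part (hV.const_mul _), integral_const_mul,
        integral_sub_integral (hW.integrable one_le_two), mul_zero, sub_zero]

lemma integral_posPart_add_posPart_sub [IsProbabilityMeasure μ] {X Y : Ω → ℝ}
    (hX : Integrable X μ) (hY : Integrable Y μ) :
    ∫ ω, max ((X + Y) ω - μ[X + Y]) 0 ∂μ + ∫ ω, max ((X - Y) ω - μ[X - Y]) 0 ∂μ
      = ∫ ω, max |X ω - μ[X]| |Y ω - μ[Y]| ∂μ := by
  have hX' : Integrable (fun ω ↦ X ω - μ[X]) μ := hX.sub (integrable_const _)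
  have hY' : Integrable (fun ω ↦ Y ω - μ[Y]) μ := hY.sub (integrable_const _)
  have hU : Integrable (fun ω ↦ max ((X + Y) ω - (μ[X] + μ[Y])) 0) μ :=
    ((hX.add hY).sub (integrable_const _)).pos_part
  have hV : Integrable (fun ω ↦ max ((X - Y) ω - (μ[X] - μ[Y])) 0) μ :=
    ((hX.sub hY).sub (integrable_const _)).pos_part
  rw [integral_add' hX hY, integral_sub' hX hY, ← integral_add hU hV]
  calc ∫ ω, (max ((X + Y) ω - (μ[X] + μ[Y])) 0 + max ((X - Y) ω - (μ[X] - μ[Y])) 0) ∂μ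
      = ∫ ω, (max |X ω - μ[X]| |Y ω - μ[Y]| + (X ω - μ[X])) ∂μ := by
        refine integral_congr_ae (ae_of_all _ fun ω ↦ ?_)
        simp only [Pi.add_apply, Pi.sub_apply]
        convert posPart_add_posPart_sub (X ω - μ[X]) (Y ω - μ[Y]) using 3 <;> ring
    _ = ∫ ω, max |X ω - μ[X]| |Y ω - μ[Y]| ∂μ := by
      have hM : Integrable (fun ω ↦ max |X ω - μ[X]| |Y ω - μ[Y]|) μ := hX'.abs.sup hY'.abs
      rw [integral_add hM hX', integral_sub_integral hX, add_zero]

lemma integral_max_abs_sub_integral_le [IsProbabilityMeasure μ] {X Y : Ω → ℝ}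
    (hX : Measurable X) (hY : Measurable Y) (hX01 : ∀ ω, X ω ∈ Icc (0 : ℝ) 1)
    (hY01 : ∀ ω, Y ω ∈ Icc (0 : ℝ) 1) :
    ∫ ω, max |X ω - μ[X]| |Y ω - μ[Y]| ∂μ ≤ 4 / 7 := by
  set p := μ[X]
  set q := μ[Y]
  set r := μ[X * Y]
  have hX2 := memLp_of_forall_mem_Icc (μ := μ) hX hX01 2
  have hY2 := memLp_of_forall_mem_Icc (μ := μ) hY hY01 2
  have hXi := hX2.integrable one_le_two
  have hYi := hY2.integrable one_le_two
  have hXYi : Integrable (X * Y) μ := hX2.integrable_mul hY2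
  let f : ℝ → ℝ → ℝ := fun x y ↦ max |x - p| |y - q|
  have hconv : ∀ c : ℝ, ConvexOn ℝ (Icc (0 : ℝ) 1) fun x : ℝ ↦ |x - c| := fun c ↦ by
    simpa only [Real.dist_eq] using convexOn_dist c (convex_Icc (0 : ℝ) 1)
  have hf : ∀ ω, f (X ω) (Y ω) ≤ bilinearInterp (f 0 0) (f 1 0) (f 0 1) (f 1 1) (X ω) (Y ω) :=
    fun ω ↦ le_bilinearInterp_of_convexOn ((hconv p).sup (convexOn_const _ (convex_Icc 0 1)))
      ((hconv p).sup (convexOn_const _ (convex_Icc 0 1)))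
      ((convexOn_const _ (convex_Icc 0 1)).sup (hconv q)) (hX01 ω) (hY01 ω)
  have h00 : 0 ≤ 1 - p - q + r := by
    have h := integral_bilinearInterp hXi hYi hXYi 1 0 0 0
    simp only [mul_one, mul_zero, add_zero] at h
    rw [← h]
    exact integral_nonneg fun ω ↦ by
      simpa [bilinearInterp] using mul_nonneg (sub_nonneg.2 (hX01 ω).2) (sub_nonneg.2 (hY01 ω).2)
  have h10 : r ≤ p := integral_mono hXYi hXi fun ω ↦ mul_le_of_le_one_right (hX01 ω).1 (hY01 ω).2
  have h01 : r ≤ q := integral_mono hXYi hYi fun ω ↦ mul_le_of_le_one_left (hY01 ω).1 (hX01 ω).2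
  have h11 : 0 ≤ r := integral_nonneg fun ω ↦ mul_nonneg (hX01 ω).1 (hY01 ω).1
  calc ∫ ω, f (X ω) (Y ω) ∂μ
      ≤ ∫ ω, bilinearInterp (f 0 0) (f 1 0) (f 0 1) (f 1 1) (X ω) (Y ω) ∂μ :=
        integral_mono ((hXi.sub (integrable_const p)).abs.sup (hYi.sub (integrable_const q)).abs)
          (integrable_bilinearInterp hXi hYi hXYi _ _ _ _) hf
    _ = (1 - p - q + r) * f 0 0 + (p - r) * f 1 0 + (q - r) * f 0 1 + r * f 1 1 :=
        integral_bilinearInterp hXi hYi hXYi _ _ _ _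
    _ ≤ 4 / 7 := by
      simp only [f, zero_sub, abs_neg, abs_of_nonneg (by linarith : 0 ≤ p),
        abs_of_nonneg (by linarith : 0 ≤ q), abs_of_nonneg (by linarith : 0 ≤ 1 - p),
        abs_of_nonneg (by linarith : 0 ≤ 1 - q)]
      exact max_vertex_average_le h00 h10 h01 h11

end

/-- Covariance formulation of the Bell-CHSH inequality for `[0,1]`-valued random variables:
`Cov(a₀,b₀) + Cov(a₀,b₁) + Cov(a₁,b₀) − Cov(a₁,b₁) ≤ 4/7`. -/
theorem covariance_CHSH {Ω : Type*} [MeasurableSpace Ω] (μ : Measure Ω)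
    [IsProbabilityMeasure μ] (a₀ a₁ b₀ b₁ : Ω → ℝ)
    (ha₀ : Measurable a₀) (ha₁ : Measurable a₁)
    (hb₀ : Measurable b₀) (hb₁ : Measurable b₁)
    (ha₀r : ∀ ω, a₀ ω ∈ Set.Icc (0 : ℝ) 1) (ha₁r : ∀ ω, a₁ ω ∈ Set.Icc (0 : ℝ) 1)
    (hb₀r : ∀ ω, b₀ ω ∈ Set.Icc (0 : ℝ) 1) (hb₁r : ∀ ω, b₁ ω ∈ Set.Icc (0 : ℝ) 1) :
    cov μ a₀ b₀ + cov μ a₀ b₁ + cov μ a₁ b₀ - cov μ a₁ b₁ ≤ 4 / 7 := by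
  have ha₀2 := memLp_of_forall_mem_Icc (μ := μ) ha₀ ha₀r 2
  have ha₁2 := memLp_of_forall_mem_Icc (μ := μ) ha₁ ha₁r 2
  have hb₀2 := memLp_of_forall_mem_Icc (μ := μ) hb₀ hb₀r 2
  have hb₁2 := memLp_of_forall_mem_Icc (μ := μ) hb₁ hb₁r 2
  calc cov μ a₀ b₀ + cov μ a₀ b₁ + cov μ a₁ b₀ - cov μ a₁ b₁
      = cov[a₀, b₀ + b₁; μ] + cov[a₁, b₀ - b₁; μ] := by
        rw [covariance_add_right ha₀2 hb₀2 hb₁2, covariance_sub_right ha₁2 hb₀2 hb₁2]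
        simp only [cov_eq_covariance]
        ring
    _ ≤ ∫ ω, max ((b₀ + b₁) ω - μ[b₀ + b₁]) 0 ∂μ + ∫ ω, max ((b₀ - b₁) ω - μ[b₀ - b₁]) 0 ∂μ :=
        add_le_add (covariance_le_integral_posPart ha₀ ha₀r (hb₀2.add hb₁2))
          (covariance_le_integral_posPart ha₁ ha₁r (hb₀2.sub hb₁2))
    _ = ∫ ω, max |b₀ ω - μ[b₀]| |b₁ ω - μ[b₁]| ∂μ :=
        integral_posPart_add_posPart_sub (hb₀2.integrable one_le_two) (hb₁2.integrable one_le_two)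
    _ ≤ 4 / 7 := integral_max_abs_sub_integral_le hb₀ hb₁ hb₀r hb₁r
end

section
/- Let N ≥ 1 and let (a₀⁽ⁱ⁾, a₁⁽ⁱ⁾, b₀⁽ⁱ⁾, b₁⁽ⁱ⁾) for i = 1,…,N be random 4-tuples on a probability space, each component taking values in [0,1], such that the family of tuples indexed by i is mutually independent. Define A'ₓ := Σᵢ aₓ⁽ⁱ⁾ and B'_y := Σᵢ b_y⁽ⁱ⁾ for x, y ∈ {0,1}. Then the macroscopic Bell parameter satisfies 𝓑(A'₀, A'₁, B'₀, B'₁) ≤ 16/7. -/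
open MeasureTheory ProbabilityTheory

/-- The macroscopic Bell parameter
`𝓑(A₀,A₁,B₀,B₁) := (4/N)[Cov(A₀,B₀) + Cov(A₀,B₁) + Cov(A₁,B₀) − Cov(A₁,B₁)]`. -/
noncomputable def bell {Ω : Type*} [MeasurableSpace Ω] (μ : Measure Ω) (N : ℝ)
    (A₀ A₁ B₀ B₁ : Ω → ℝ) : ℝ :=
  (4 / N) * (cov μ A₀ B₀ + cov μ A₀ B₁ + cov μ A₁ B₀ - cov μ A₁ B₁)

section Aux

variable {Ω : Type*} [MeasurableSpace Ω] {μ : Measure Ω} [IsProbabilityMeasure μ]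

lemma integrable_bdd {f : Ω → ℝ} (hf : Measurable f) {C : ℝ} (h : ∀ ω, |f ω| ≤ C) :
    Integrable f μ :=
  ⟨hf.aestronglyMeasurable, HasFiniteIntegral.of_bounded (C := C) (ae_of_all μ fun ω => by
    simpa [Real.norm_eq_abs] using h ω)⟩

lemma integrable_of_Icc {f : Ω → ℝ} (hf : Measurable f) (h : ∀ ω, f ω ∈ Set.Icc (0:ℝ) 1) :
    Integrable f μ :=
  integrable_bdd hf (C := 1) fun ω => abs_le.2 ⟨by linarith [(h ω).1], (h ω).2⟩

lemma integral_Icc {f : Ω → ℝ} (hf : Measurable f) (h : ∀ ω, f ω ∈ Set.Icc (0:ℝ) 1) :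
    (∫ ω, f ω ∂μ) ∈ Set.Icc (0:ℝ) 1 := by
  constructor
  · exact integral_nonneg fun ω => (h ω).1
  · calc ∫ ω, f ω ∂μ ≤ ∫ _ω, (1:ℝ) ∂μ :=
        integral_mono (integrable_of_Icc hf h) (integrable_const 1) fun ω => (h ω).2
    _ = 1 := by simp

lemma integrable_centered_mul {f g : Ω → ℝ} (hf : Measurable f) (hg : Measurable g)
    (rf : ∀ ω, f ω ∈ Set.Icc (0:ℝ) 1) (rg : ∀ ω, g ω ∈ Set.Icc (0:ℝ) 1) {c c' : ℝ}
    (hc : c ∈ Set.Icc (0:ℝ) 1) (hc' : c' ∈ Set.Icc (0:ℝ) 1) :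
    Integrable (fun ω => (f ω - c) * (g ω - c')) μ := by
  refine integrable_bdd ((hf.sub measurable_const).mul (hg.sub measurable_const)) (C := 1)
    fun ω => ?_
  rw [abs_mul]
  have h1 : |f ω - c| ≤ 1 := abs_le.2 ⟨by linarith [(rf ω).1, hc.2], by linarith [(rf ω).2, hc.1]⟩
  have h2 : |g ω - c'| ≤ 1 :=
    abs_le.2 ⟨by linarith [(rg ω).1, hc'.2], by linarith [(rg ω).2, hc'.1]⟩
  exact mul_le_one₀ h1 (abs_nonneg _) h2

lemma indep_cov_zero {X Y : Ω → ℝ} (h : IndepFun X Y μ) (hX : Integrable X μ)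
    (hY : Integrable Y μ) : cov μ X Y = 0 := by
  have h1 : IndepFun (fun ω => X ω - ∫ ω', X ω' ∂μ) (fun ω => Y ω - ∫ ω', Y ω' ∂μ) μ :=
    h.comp (measurable_id.sub measurable_const) (measurable_id.sub measurable_const)
  have e1 : ∫ ω, (X ω - ∫ ω', X ω' ∂μ) ∂μ
      = (∫ ω, X ω ∂μ) - ∫ _ω, (∫ ω', X ω' ∂μ) ∂μ := integral_sub hX (integrable_const _)
  have E : ∫ ω, (X ω - ∫ ω', X ω' ∂μ) * (Y ω - ∫ ω', Y ω' ∂μ) ∂μ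
      = (∫ ω, (X ω - ∫ ω', X ω' ∂μ) ∂μ) * ∫ ω, (Y ω - ∫ ω', Y ω' ∂μ) ∂μ :=
    h1.integral_fun_mul_eq_mul_integral ((hX.sub (integrable_const _)).1) ((hY.sub (integrable_const _)).1)
  rw [cov, E, e1, integral_const]
  simp

lemma cov_sum {N : ℕ} (A B : Fin N → Ω → ℝ)
    (hA : ∀ i, Measurable (A i)) (hB : ∀ i, Measurable (B i))
    (rA : ∀ i ω, A i ω ∈ Set.Icc (0:ℝ) 1) (rB : ∀ i ω, B i ω ∈ Set.Icc (0:ℝ) 1)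
    (hind : ∀ i j, i ≠ j → IndepFun (A i) (B j) μ) :
    cov μ (fun ω => ∑ i, A i ω) (fun ω => ∑ i, B i ω) = ∑ i, cov μ (A i) (B i) := by
  have iA : ∀ i, Integrable (A i) μ := fun i => integrable_of_Icc (hA i) (rA i)
  have iB : ∀ i, Integrable (B i) μ := fun i => integrable_of_Icc (hB i) (rB i)
  have hprod : ∀ i j, Integrable
      (fun ω => (A i ω - ∫ ω', A i ω' ∂μ) * (B j ω - ∫ ω', B j ω' ∂μ)) μ := fun i j =>
    integrable_centered_mul (hA i) (hB j) (rA i) (rB j)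
      (integral_Icc (hA i) (rA i)) (integral_Icc (hB j) (rB j))
  have hstep : cov μ (fun ω => ∑ i, A i ω) (fun ω => ∑ i, B i ω)
      = ∫ ω, ∑ i, ∑ j, (A i ω - ∫ ω', A i ω' ∂μ) * (B j ω - ∫ ω', B j ω' ∂μ) ∂μ := by
    rw [cov]
    congr 1
    funext ω
    rw [integral_finset_sum _ fun i _ => iA i, integral_finset_sum _ fun i _ => iB i,
      ← Finset.sum_sub_distrib, ← Finset.sum_sub_distrib, Finset.sum_mul_sum]
  rw [hstep, integral_finset_sum _ fun i _ => integrable_finset_sum _ fun j _ => hprod i j]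
  refine Finset.sum_congr rfl fun i _ => ?_
  rw [integral_finset_sum _ fun j _ => hprod i j]
  exact Finset.sum_eq_single i
    (fun j _ hj => indep_cov_zero (hind i j (Ne.symm hj)) (iA i) (iB j))
    (by simp)

lemma integral_one_sub {f : Ω → ℝ} (hf : Integrable f μ) :
    ∫ ω, (1 - f ω) ∂μ = 1 - ∫ ω, f ω ∂μ := by
  rw [integral_sub (integrable_const 1) hf, integral_const]; simp

lemma cov_one_sub_left {f : Ω → ℝ} (g : Ω → ℝ) (hf : Integrable f μ) :
    cov μ (fun ω => 1 - f ω) g = - cov μ f g := by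
  rw [cov, cov, integral_one_sub hf, ← integral_neg]
  congr 1
  funext ω
  ring

lemma cov_one_sub_right (f : Ω → ℝ) {g : Ω → ℝ} (hg : Integrable g μ) :
    cov μ f (fun ω => 1 - g ω) = - cov μ f g := by
  rw [cov, cov, integral_one_sub hg, ← integral_neg]
  congr 1
  funext ω
  ring

end Aux

lemma ptA (A α U : ℝ) (hA0 : 0 ≤ A) (hA1 : A ≤ 1) :
    (A - α) * U ≤ |U|/2 + (1/2 - α) * U := by
  rcases abs_cases U with ⟨h, hs⟩ | ⟨h, hs⟩ <;> rw [h] <;> nlinarith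

lemma ptB1 (x y m d : ℝ) (hx0 : 0 ≤ x) (hx1 : x ≤ 1) (hy0 : 0 ≤ y) (hy1 : y ≤ 1)
    (hd : 0 ≤ d) (hdm : d ≤ m) (hmd : m + d ≤ 1) :
    |x+y-m| + |x-y-d| ≤ 8/7 + (2-2*m-d)*(x+y-m) - d*(x-y-d) := by
  have hQ : 0 ≤ 2*m^2+m*d+d^2-3*m-d+8/7 := by
    nlinarith [sq_nonneg (m-5/7), sq_nonneg (d-1/7), sq_nonneg (m+d-6/7)]
  have w00 : (0:ℝ) ≤ (1-x)*(1-y) := mul_nonneg (by linarith) (by linarith)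
  have w10 : (0:ℝ) ≤ x*(1-y) := mul_nonneg hx0 (by linarith)
  have w01 : (0:ℝ) ≤ (1-x)*y := mul_nonneg (by linarith) hy0
  have w11 : (0:ℝ) ≤ x*y := mul_nonneg hx0 hy0
  rcases abs_cases (x+y-m) with ⟨h1, hs1⟩ | ⟨h1, hs1⟩ <;>
    rcases abs_cases (x-y-d) with ⟨h2, hs2⟩ | ⟨h2, hs2⟩ <;> rw [h1, h2]
  · linarith [mul_nonneg w00 (by linarith : (0:ℝ) ≤ 2*m+2*d),
      mul_nonneg w01 (by linarith : (0:ℝ) ≤ 2+2*d),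
      mul_nonneg w11 (by linarith : (0:ℝ) ≤ 2-2*m)]
  · linarith [mul_nonneg w00 (by linarith : (0:ℝ) ≤ 2*m),
      mul_nonneg w10 (by linarith : (0:ℝ) ≤ 2-2*d),
      mul_nonneg w11 (by linarith : (0:ℝ) ≤ 2-2*m-2*d)]
  · linarith [mul_nonneg w00 (by linarith : (0:ℝ) ≤ 2*d),
      mul_nonneg w10 (by linarith : (0:ℝ) ≤ 2-2*m),
      mul_nonneg w01 (by linarith : (0:ℝ) ≤ 4-2*m+2*d),
      mul_nonneg w11 (by linarith : (0:ℝ) ≤ 6-4*m)]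
  · linarith [mul_nonneg w10 (by linarith : (0:ℝ) ≤ 4-2*m-2*d),
      mul_nonneg w01 (by linarith : (0:ℝ) ≤ 2-2*m),
      mul_nonneg w11 (by linarith : (0:ℝ) ≤ 6-4*m-2*d)]

lemma ptB2 (x y m d : ℝ) (hx0 : 0 ≤ x) (hx1 : x ≤ 1) (hy0 : 0 ≤ y) (hy1 : y ≤ 1)
    (hd : 0 ≤ d) (hdm : d ≤ m) (hm1 : m ≤ 1) (hmd : 1 ≤ m + d) :
    |x+y-m| + |x-y-d| ≤ 8/7 + (1-m)*(x+y-m) + (1-m-2*d)*(x-y-d) := by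
  have hQ : 0 ≤ m^2+m*d+2*d^2-2*m-2*d+8/7 := by
    nlinarith [sq_nonneg (m-6/7), sq_nonneg (d-2/7), sq_nonneg (m+d-8/7)]
  have w00 : (0:ℝ) ≤ (1-x)*(1-y) := mul_nonneg (by linarith) (by linarith)
  have w10 : (0:ℝ) ≤ x*(1-y) := mul_nonneg hx0 (by linarith)
  have w01 : (0:ℝ) ≤ (1-x)*y := mul_nonneg (by linarith) hy0
  have w11 : (0:ℝ) ≤ x*y := mul_nonneg hx0 hy0
  rcases abs_cases (x+y-m) with ⟨h1, hs1⟩ | ⟨h1, hs1⟩ <;>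
    rcases abs_cases (x-y-d) with ⟨h2, hs2⟩ | ⟨h2, hs2⟩ <;> rw [h1, h2]
  · linarith [mul_nonneg w00 (by linarith : (0:ℝ) ≤ 2*m+2*d),
      mul_nonneg w01 (by linarith : (0:ℝ) ≤ 2*m+4*d),
      mul_nonneg w11 (by linarith : (0:ℝ) ≤ 2*d)]
  · linarith [mul_nonneg w00 (by linarith : (0:ℝ) ≤ 2*m),
      mul_nonneg w10 (by linarith : (0:ℝ) ≤ 2-2*d),
      mul_nonneg w01 (by linarith : (0:ℝ) ≤ 2*(m+d-1))]
  · linarith [mul_nonneg w00 (by linarith : (0:ℝ) ≤ 2*d),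
      mul_nonneg w10 (by linarith : (0:ℝ) ≤ 2-2*m),
      mul_nonneg w01 (by linarith : (0:ℝ) ≤ 2+4*d),
      mul_nonneg w11 (by linarith : (0:ℝ) ≤ 4-2*m+2*d)]
  · linarith [mul_nonneg w10 (by linarith : (0:ℝ) ≤ 4-2*m-2*d),
      mul_nonneg w01 (by linarith : (0:ℝ) ≤ 2*d),
      mul_nonneg w11 (by linarith : (0:ℝ) ≤ 4-2*m)]

section Site

variable {Ω : Type*} [MeasurableSpace Ω] {μ : Measure Ω} [IsProbabilityMeasure μ]

lemma site_core (a0 a1 b0 b1 : Ω → ℝ)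
    (ma0 : Measurable a0) (ma1 : Measurable a1) (mb0 : Measurable b0) (mb1 : Measurable b1)
    (ra0 : ∀ ω, a0 ω ∈ Set.Icc (0:ℝ) 1) (ra1 : ∀ ω, a1 ω ∈ Set.Icc (0:ℝ) 1)
    (rb0 : ∀ ω, b0 ω ∈ Set.Icc (0:ℝ) 1) (rb1 : ∀ ω, b1 ω ∈ Set.Icc (0:ℝ) 1)
    (hd : ∫ ω, b1 ω ∂μ ≤ ∫ ω, b0 ω ∂μ)
    (hm : (∫ ω, b0 ω ∂μ) + ∫ ω, b1 ω ∂μ ≤ 1) :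
    cov μ a0 b0 + cov μ a0 b1 + cov μ a1 b0 - cov μ a1 b1 ≤ 4/7 := by
  have ia0 : Integrable a0 μ := integrable_of_Icc ma0 ra0
  have ia1 : Integrable a1 μ := integrable_of_Icc ma1 ra1
  have ib0 : Integrable b0 μ := integrable_of_Icc mb0 rb0
  have ib1 : Integrable b1 μ := integrable_of_Icc mb1 rb1
  have hα0 : (∫ ω, a0 ω ∂μ) ∈ Set.Icc (0:ℝ) 1 := integral_Icc ma0 ra0
  have hα1 : (∫ ω, a1 ω ∂μ) ∈ Set.Icc (0:ℝ) 1 := integral_Icc ma1 ra1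
  have hβ0 : (∫ ω, b0 ω ∂μ) ∈ Set.Icc (0:ℝ) 1 := integral_Icc mb0 rb0
  have hβ1 : (∫ ω, b1 ω ∂μ) ∈ Set.Icc (0:ℝ) 1 := integral_Icc mb1 rb1
  -- abbreviations (only at the meta level)
  obtain ⟨l, k, hlk⟩ : ∃ l k : ℝ, ∀ x y : ℝ, x ∈ Set.Icc (0:ℝ) 1 → y ∈ Set.Icc (0:ℝ) 1 →
      |x + y - ((∫ ω, b0 ω ∂μ) + ∫ ω, b1 ω ∂μ)| + |x - y - ((∫ ω, b0 ω ∂μ) - ∫ ω, b1 ω ∂μ)|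
        ≤ 8/7 + l * (x + y - ((∫ ω, b0 ω ∂μ) + ∫ ω, b1 ω ∂μ))
            + k * (x - y - ((∫ ω, b0 ω ∂μ) - ∫ ω, b1 ω ∂μ)) := by
    rcases le_total (((∫ ω, b0 ω ∂μ) + ∫ ω, b1 ω ∂μ) + ((∫ ω, b0 ω ∂μ) - ∫ ω, b1 ω ∂μ)) 1
      with hc | hc
    · refine ⟨2 - 2*((∫ ω, b0 ω ∂μ) + ∫ ω, b1 ω ∂μ) - ((∫ ω, b0 ω ∂μ) - ∫ ω, b1 ω ∂μ),
        -((∫ ω, b0 ω ∂μ) - ∫ ω, b1 ω ∂μ), fun x y hx hy => ?_⟩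
      have := ptB1 x y ((∫ ω, b0 ω ∂μ) + ∫ ω, b1 ω ∂μ) ((∫ ω, b0 ω ∂μ) - ∫ ω, b1 ω ∂μ)
        hx.1 hx.2 hy.1 hy.2 (by linarith) (by linarith [hβ1.1]) hc
      linarith
    · refine ⟨1 - ((∫ ω, b0 ω ∂μ) + ∫ ω, b1 ω ∂μ),
        1 - ((∫ ω, b0 ω ∂μ) + ∫ ω, b1 ω ∂μ) - 2*((∫ ω, b0 ω ∂μ) - ∫ ω, b1 ω ∂μ),
        fun x y hx hy => ?_⟩
      have := ptB2 x y ((∫ ω, b0 ω ∂μ) + ∫ ω, b1 ω ∂μ) ((∫ ω, b0 ω ∂μ) - ∫ ω, b1 ω ∂μ)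
        hx.1 hx.2 hy.1 hy.2 (by linarith) (by linarith [hβ1.1]) hm hc
      linarith
  -- integrable pieces
  have i00 : Integrable (fun ω => (a0 ω - ∫ ω', a0 ω' ∂μ) * (b0 ω - ∫ ω', b0 ω' ∂μ)) μ :=
    integrable_centered_mul ma0 mb0 ra0 rb0 hα0 hβ0
  have i01 : Integrable (fun ω => (a0 ω - ∫ ω', a0 ω' ∂μ) * (b1 ω - ∫ ω', b1 ω' ∂μ)) μ :=
    integrable_centered_mul ma0 mb1 ra0 rb1 hα0 hβ1
  have i10 : Integrable (fun ω => (a1 ω - ∫ ω', a1 ω' ∂μ) * (b0 ω - ∫ ω', b0 ω' ∂μ)) μ :=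
    integrable_centered_mul ma1 mb0 ra1 rb0 hα1 hβ0
  have i11 : Integrable (fun ω => (a1 ω - ∫ ω', a1 ω' ∂μ) * (b1 ω - ∫ ω', b1 ω' ∂μ)) μ :=
    integrable_centered_mul ma1 mb1 ra1 rb1 hα1 hβ1
  have iF : Integrable (fun ω =>
      (a0 ω - ∫ ω', a0 ω' ∂μ) * (b0 ω + b1 ω - ((∫ ω, b0 ω ∂μ) + ∫ ω, b1 ω ∂μ))
      + (a1 ω - ∫ ω', a1 ω' ∂μ) * (b0 ω - b1 ω - ((∫ ω, b0 ω ∂μ) - ∫ ω, b1 ω ∂μ))) μ := by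
    have : (fun ω =>
        (a0 ω - ∫ ω', a0 ω' ∂μ) * (b0 ω + b1 ω - ((∫ ω, b0 ω ∂μ) + ∫ ω, b1 ω ∂μ))
        + (a1 ω - ∫ ω', a1 ω' ∂μ) * (b0 ω - b1 ω - ((∫ ω, b0 ω ∂μ) - ∫ ω, b1 ω ∂μ)))
        = fun ω =>
          ((a0 ω - ∫ ω', a0 ω' ∂μ) * (b0 ω - ∫ ω', b0 ω' ∂μ)
            + (a0 ω - ∫ ω', a0 ω' ∂μ) * (b1 ω - ∫ ω', b1 ω' ∂μ))
          + ((a1 ω - ∫ ω', a1 ω' ∂μ) * (b0 ω - ∫ ω', b0 ω' ∂μ)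
            - (a1 ω - ∫ ω', a1 ω' ∂μ) * (b1 ω - ∫ ω', b1 ω' ∂μ)) := by
      funext ω; ring
    rw [this]
    exact (i00.add i01).add (i10.sub i11)
  have iU : Integrable (fun ω => b0 ω + b1 ω - ((∫ ω, b0 ω ∂μ) + ∫ ω, b1 ω ∂μ)) μ :=
    (ib0.add ib1).sub (integrable_const _)
  have iV : Integrable (fun ω => b0 ω - b1 ω - ((∫ ω, b0 ω ∂μ) - ∫ ω, b1 ω ∂μ)) μ :=
    (ib0.sub ib1).sub (integrable_const _)
  have hU0 : ∫ ω, (b0 ω + b1 ω - ((∫ ω, b0 ω ∂μ) + ∫ ω, b1 ω ∂μ)) ∂μ = 0 := by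
    have e1 : ∫ ω, (b0 ω + b1 ω - ((∫ ω, b0 ω ∂μ) + ∫ ω, b1 ω ∂μ)) ∂μ
        = (∫ ω, (b0 ω + b1 ω) ∂μ) - ∫ _ω, ((∫ ω, b0 ω ∂μ) + ∫ ω, b1 ω ∂μ) ∂μ :=
      integral_sub (ib0.add ib1) (integrable_const _)
    have e2 : ∫ ω, (b0 ω + b1 ω) ∂μ = (∫ ω, b0 ω ∂μ) + ∫ ω, b1 ω ∂μ := integral_add ib0 ib1
    rw [e1, e2, integral_const]; simp
  have hV0 : ∫ ω, (b0 ω - b1 ω - ((∫ ω, b0 ω ∂μ) - ∫ ω, b1 ω ∂μ)) ∂μ = 0 := by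
    have e1 : ∫ ω, (b0 ω - b1 ω - ((∫ ω, b0 ω ∂μ) - ∫ ω, b1 ω ∂μ)) ∂μ
        = (∫ ω, (b0 ω - b1 ω) ∂μ) - ∫ _ω, ((∫ ω, b0 ω ∂μ) - ∫ ω, b1 ω ∂μ) ∂μ :=
      integral_sub (ib0.sub ib1) (integrable_const _)
    have e2 : ∫ ω, (b0 ω - b1 ω) ∂μ = (∫ ω, b0 ω ∂μ) - ∫ ω, b1 ω ∂μ := integral_sub ib0 ib1
    rw [e1, e2, integral_const]; simp
  -- the sum of covariances as one integral
  have hS : cov μ a0 b0 + cov μ a0 b1 + cov μ a1 b0 - cov μ a1 b1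
      = ∫ ω, ((a0 ω - ∫ ω', a0 ω' ∂μ) * (b0 ω + b1 ω - ((∫ ω, b0 ω ∂μ) + ∫ ω, b1 ω ∂μ))
          + (a1 ω - ∫ ω', a1 ω' ∂μ) * (b0 ω - b1 ω - ((∫ ω, b0 ω ∂μ) - ∫ ω, b1 ω ∂μ))) ∂μ := by
    have e1 : ∫ ω, ((a0 ω - ∫ ω', a0 ω' ∂μ) * (b0 ω + b1 ω - ((∫ ω, b0 ω ∂μ) + ∫ ω, b1 ω ∂μ))
          + (a1 ω - ∫ ω', a1 ω' ∂μ) * (b0 ω - b1 ω - ((∫ ω, b0 ω ∂μ) - ∫ ω, b1 ω ∂μ))) ∂μ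
        = ∫ ω, (((a0 ω - ∫ ω', a0 ω' ∂μ) * (b0 ω - ∫ ω', b0 ω' ∂μ)
            + (a0 ω - ∫ ω', a0 ω' ∂μ) * (b1 ω - ∫ ω', b1 ω' ∂μ))
          + ((a1 ω - ∫ ω', a1 ω' ∂μ) * (b0 ω - ∫ ω', b0 ω' ∂μ)
            - (a1 ω - ∫ ω', a1 ω' ∂μ) * (b1 ω - ∫ ω', b1 ω' ∂μ))) ∂μ := by
      congr 1; funext ω; ring
    have t1 : ∫ ω, (((a0 ω - ∫ ω', a0 ω' ∂μ) * (b0 ω - ∫ ω', b0 ω' ∂μ)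
            + (a0 ω - ∫ ω', a0 ω' ∂μ) * (b1 ω - ∫ ω', b1 ω' ∂μ))
          + ((a1 ω - ∫ ω', a1 ω' ∂μ) * (b0 ω - ∫ ω', b0 ω' ∂μ)
            - (a1 ω - ∫ ω', a1 ω' ∂μ) * (b1 ω - ∫ ω', b1 ω' ∂μ))) ∂μ
        = (∫ ω, ((a0 ω - ∫ ω', a0 ω' ∂μ) * (b0 ω - ∫ ω', b0 ω' ∂μ)
            + (a0 ω - ∫ ω', a0 ω' ∂μ) * (b1 ω - ∫ ω', b1 ω' ∂μ)) ∂μ)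
          + ∫ ω, ((a1 ω - ∫ ω', a1 ω' ∂μ) * (b0 ω - ∫ ω', b0 ω' ∂μ)
            - (a1 ω - ∫ ω', a1 ω' ∂μ) * (b1 ω - ∫ ω', b1 ω' ∂μ)) ∂μ :=
      integral_add (i00.add i01) (i10.sub i11)
    have t2 : ∫ ω, ((a0 ω - ∫ ω', a0 ω' ∂μ) * (b0 ω - ∫ ω', b0 ω' ∂μ)
            + (a0 ω - ∫ ω', a0 ω' ∂μ) * (b1 ω - ∫ ω', b1 ω' ∂μ)) ∂μ
        = (∫ ω, (a0 ω - ∫ ω', a0 ω' ∂μ) * (b0 ω - ∫ ω', b0 ω' ∂μ) ∂μ)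
            + ∫ ω, (a0 ω - ∫ ω', a0 ω' ∂μ) * (b1 ω - ∫ ω', b1 ω' ∂μ) ∂μ :=
      integral_add i00 i01
    have t3 : ∫ ω, ((a1 ω - ∫ ω', a1 ω' ∂μ) * (b0 ω - ∫ ω', b0 ω' ∂μ)
            - (a1 ω - ∫ ω', a1 ω' ∂μ) * (b1 ω - ∫ ω', b1 ω' ∂μ)) ∂μ
        = (∫ ω, (a1 ω - ∫ ω', a1 ω' ∂μ) * (b0 ω - ∫ ω', b0 ω' ∂μ) ∂μ)
            - ∫ ω, (a1 ω - ∫ ω', a1 ω' ∂μ) * (b1 ω - ∫ ω', b1 ω' ∂μ) ∂μ :=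
      integral_sub i10 i11
    rw [e1, t1, t2, t3, cov, cov, cov, cov]
    ring
  rw [hS]
  -- compare with the linear upper bound
  have key : ∀ ω, (a0 ω - ∫ ω', a0 ω' ∂μ) * (b0 ω + b1 ω - ((∫ ω, b0 ω ∂μ) + ∫ ω, b1 ω ∂μ))
        + (a1 ω - ∫ ω', a1 ω' ∂μ) * (b0 ω - b1 ω - ((∫ ω, b0 ω ∂μ) - ∫ ω, b1 ω ∂μ))
      ≤ 4/7 + (1/2 - (∫ ω', a0 ω' ∂μ) + l/2)
            * (b0 ω + b1 ω - ((∫ ω, b0 ω ∂μ) + ∫ ω, b1 ω ∂μ))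
          + (1/2 - (∫ ω', a1 ω' ∂μ) + k/2)
            * (b0 ω - b1 ω - ((∫ ω, b0 ω ∂μ) - ∫ ω, b1 ω ∂μ)) := by
    intro ω
    have p1 := ptA (a0 ω) (∫ ω', a0 ω' ∂μ)
      (b0 ω + b1 ω - ((∫ ω, b0 ω ∂μ) + ∫ ω, b1 ω ∂μ)) (ra0 ω).1 (ra0 ω).2
    have p2 := ptA (a1 ω) (∫ ω', a1 ω' ∂μ)
      (b0 ω - b1 ω - ((∫ ω, b0 ω ∂μ) - ∫ ω, b1 ω ∂μ)) (ra1 ω).1 (ra1 ω).2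
    have p3 := hlk (b0 ω) (b1 ω) (rb0 ω) (rb1 ω)
    linarith
  have iG : Integrable (fun ω => 4/7 + (1/2 - (∫ ω', a0 ω' ∂μ) + l/2)
            * (b0 ω + b1 ω - ((∫ ω, b0 ω ∂μ) + ∫ ω, b1 ω ∂μ))
          + (1/2 - (∫ ω', a1 ω' ∂μ) + k/2)
            * (b0 ω - b1 ω - ((∫ ω, b0 ω ∂μ) - ∫ ω, b1 ω ∂μ))) μ :=
    ((integrable_const _).add (iU.const_mul _)).add (iV.const_mul _)
  calc ∫ ω, ((a0 ω - ∫ ω', a0 ω' ∂μ) * (b0 ω + b1 ω - ((∫ ω, b0 ω ∂μ) + ∫ ω, b1 ω ∂μ))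
          + (a1 ω - ∫ ω', a1 ω' ∂μ) * (b0 ω - b1 ω - ((∫ ω, b0 ω ∂μ) - ∫ ω, b1 ω ∂μ))) ∂μ
      ≤ ∫ ω, (4/7 + (1/2 - (∫ ω', a0 ω' ∂μ) + l/2)
            * (b0 ω + b1 ω - ((∫ ω, b0 ω ∂μ) + ∫ ω, b1 ω ∂μ))
          + (1/2 - (∫ ω', a1 ω' ∂μ) + k/2)
            * (b0 ω - b1 ω - ((∫ ω, b0 ω ∂μ) - ∫ ω, b1 ω ∂μ))) ∂μ :=
        integral_mono iF iG key
    _ = 4/7 := by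
        have e1 : ∫ ω, ((4/7 + (1/2 - (∫ ω', a0 ω' ∂μ) + l/2)
              * (b0 ω + b1 ω - ((∫ ω, b0 ω ∂μ) + ∫ ω, b1 ω ∂μ)))
            + (1/2 - (∫ ω', a1 ω' ∂μ) + k/2)
              * (b0 ω - b1 ω - ((∫ ω, b0 ω ∂μ) - ∫ ω, b1 ω ∂μ))) ∂μ
            = (∫ ω, (4/7 + (1/2 - (∫ ω', a0 ω' ∂μ) + l/2)
              * (b0 ω + b1 ω - ((∫ ω, b0 ω ∂μ) + ∫ ω, b1 ω ∂μ))) ∂μ)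
            + ∫ ω, (1/2 - (∫ ω', a1 ω' ∂μ) + k/2)
              * (b0 ω - b1 ω - ((∫ ω, b0 ω ∂μ) - ∫ ω, b1 ω ∂μ)) ∂μ :=
          integral_add ((integrable_const _).add (iU.const_mul _)) (iV.const_mul _)
        have e2 : ∫ ω, ((4:ℝ)/7 + (1/2 - (∫ ω', a0 ω' ∂μ) + l/2)
              * (b0 ω + b1 ω - ((∫ ω, b0 ω ∂μ) + ∫ ω, b1 ω ∂μ))) ∂μ
            = (∫ _ω, (4:ℝ)/7 ∂μ) + ∫ ω, (1/2 - (∫ ω', a0 ω' ∂μ) + l/2)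
              * (b0 ω + b1 ω - ((∫ ω, b0 ω ∂μ) + ∫ ω, b1 ω ∂μ)) ∂μ :=
          integral_add (integrable_const _) (iU.const_mul _)
        have e3 : ∫ ω, (1/2 - (∫ ω', a0 ω' ∂μ) + l/2)
              * (b0 ω + b1 ω - ((∫ ω, b0 ω ∂μ) + ∫ ω, b1 ω ∂μ)) ∂μ
            = (1/2 - (∫ ω', a0 ω' ∂μ) + l/2)
              * ∫ ω, (b0 ω + b1 ω - ((∫ ω, b0 ω ∂μ) + ∫ ω, b1 ω ∂μ)) ∂μ :=
          integral_const_mul _ _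
        have e4 : ∫ ω, (1/2 - (∫ ω', a1 ω' ∂μ) + k/2)
              * (b0 ω - b1 ω - ((∫ ω, b0 ω ∂μ) - ∫ ω, b1 ω ∂μ)) ∂μ
            = (1/2 - (∫ ω', a1 ω' ∂μ) + k/2)
              * ∫ ω, (b0 ω - b1 ω - ((∫ ω, b0 ω ∂μ) - ∫ ω, b1 ω ∂μ)) ∂μ :=
          integral_const_mul _ _
        rw [e1, e2, e3, e4, hU0, hV0, integral_const]
        simp

end Site

section Site2

variable {Ω : Type*} [MeasurableSpace Ω] {μ : Measure Ω} [IsProbabilityMeasure μ]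

lemma one_sub_Icc {f : Ω → ℝ} (h : ∀ ω, f ω ∈ Set.Icc (0:ℝ) 1) :
    ∀ ω, (1 - f ω) ∈ Set.Icc (0:ℝ) 1 := fun ω => ⟨by linarith [(h ω).2], by linarith [(h ω).1]⟩

lemma site (a0 a1 b0 b1 : Ω → ℝ)
    (ma0 : Measurable a0) (ma1 : Measurable a1) (mb0 : Measurable b0) (mb1 : Measurable b1)
    (ra0 : ∀ ω, a0 ω ∈ Set.Icc (0:ℝ) 1) (ra1 : ∀ ω, a1 ω ∈ Set.Icc (0:ℝ) 1)
    (rb0 : ∀ ω, b0 ω ∈ Set.Icc (0:ℝ) 1) (rb1 : ∀ ω, b1 ω ∈ Set.Icc (0:ℝ) 1) :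
    cov μ a0 b0 + cov μ a0 b1 + cov μ a1 b0 - cov μ a1 b1 ≤ 4/7 := by
  have ia0 : Integrable a0 μ := integrable_of_Icc ma0 ra0
  have ia1 : Integrable a1 μ := integrable_of_Icc ma1 ra1
  have ib0 : Integrable b0 μ := integrable_of_Icc mb0 rb0
  have ib1 : Integrable b1 μ := integrable_of_Icc mb1 rb1
  rcases le_total ((∫ ω, b0 ω ∂μ) + ∫ ω, b1 ω ∂μ) 1 with hm | hm
  · rcases le_total (∫ ω, b1 ω ∂μ) (∫ ω, b0 ω ∂μ) with hd | hd
    · exact site_core a0 a1 b0 b1 ma0 ma1 mb0 mb1 ra0 ra1 rb0 rb1 hd hm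
    · have h := site_core a0 (fun ω => 1 - a1 ω) b1 b0 ma0 (measurable_const.sub ma1)
        mb1 mb0 ra0 (one_sub_Icc ra1) rb1 rb0 hd (by linarith)
      rw [cov_one_sub_left b1 ia1, cov_one_sub_left b0 ia1] at h
      linarith
  · rcases le_total (∫ ω, b1 ω ∂μ) (∫ ω, b0 ω ∂μ) with hd | hd
    · -- m ≥ 1, d ≥ 0 : use (1-a0, a1, 1-b1, 1-b0)
      have h := site_core (fun ω => 1 - a0 ω) a1 (fun ω => 1 - b1 ω) (fun ω => 1 - b0 ω)
        (measurable_const.sub ma0) ma1 (measurable_const.sub mb1) (measurable_const.sub mb0)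
        (one_sub_Icc ra0) ra1 (one_sub_Icc rb1) (one_sub_Icc rb0)
        (by rw [integral_one_sub ib0, integral_one_sub ib1]; linarith)
        (by rw [integral_one_sub ib0, integral_one_sub ib1]; linarith)
      rw [cov_one_sub_left (fun ω => 1 - b1 ω) ia0, cov_one_sub_left (fun ω => 1 - b0 ω) ia0,
        cov_one_sub_right a0 ib1, cov_one_sub_right a0 ib0,
        cov_one_sub_right a1 ib1, cov_one_sub_right a1 ib0] at h
      linarith
    · -- m ≥ 1, d ≤ 0 : use (1-a0, 1-a1, 1-b0, 1-b1)
      have h := site_core (fun ω => 1 - a0 ω) (fun ω => 1 - a1 ω)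
        (fun ω => 1 - b0 ω) (fun ω => 1 - b1 ω)
        (measurable_const.sub ma0) (measurable_const.sub ma1)
        (measurable_const.sub mb0) (measurable_const.sub mb1)
        (one_sub_Icc ra0) (one_sub_Icc ra1) (one_sub_Icc rb0) (one_sub_Icc rb1)
        (by rw [integral_one_sub ib0, integral_one_sub ib1]; linarith)
        (by rw [integral_one_sub ib0, integral_one_sub ib1]; linarith)
      rw [cov_one_sub_left (fun ω => 1 - b0 ω) ia0, cov_one_sub_left (fun ω => 1 - b1 ω) ia0,
        cov_one_sub_left (fun ω => 1 - b0 ω) ia1, cov_one_sub_left (fun ω => 1 - b1 ω) ia1,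
        cov_one_sub_right a0 ib0, cov_one_sub_right a0 ib1,
        cov_one_sub_right a1 ib0, cov_one_sub_right a1 ib1] at h
      linarith

end Site2


/-- The ideal (noiseless) macroscopic Bell inequality: for `N` mutually independent
microscopic 4-tuples of `[0,1]`-valued random variables, the macroscopic Bell parameter
of the summed variables is at most `16/7`. -/
theorem macroscopic_bell_ideal {Ω : Type*} [MeasurableSpace Ω] (μ : Measure Ω)
    [IsProbabilityMeasure μ] (N : ℕ) (hN : 1 ≤ N)
    (a b : Fin 2 → Fin N → Ω → ℝ)
    (hameas : ∀ x i, Measurable (a x i)) (hbmeas : ∀ y i, Measurable (b y i))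
    (har : ∀ x i ω, a x i ω ∈ Set.Icc (0 : ℝ) 1)
    (hbr : ∀ y i ω, b y i ω ∈ Set.Icc (0 : ℝ) 1)
    (hindep : iIndepFun
      (fun i ω => (a 0 i ω, a 1 i ω, b 0 i ω, b 1 i ω)) μ) :
    bell μ N (fun ω => ∑ i, a 0 i ω) (fun ω => ∑ i, a 1 i ω)
      (fun ω => ∑ i, b 0 i ω) (fun ω => ∑ i, b 1 i ω) ≤ 16 / 7 := by
  have hcomp : ∀ (i j : Fin N), i ≠ j → ∀ (x y : Fin 2), IndepFun (a x i) (b y j) μ := by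
    intro i j hij x y
    have h := hindep.indepFun hij
    fin_cases x <;> fin_cases y
    · exact h.comp measurable_fst (measurable_fst.comp (measurable_snd.comp measurable_snd))
    · exact h.comp measurable_fst (measurable_snd.comp (measurable_snd.comp measurable_snd))
    · exact h.comp (measurable_fst.comp measurable_snd)
        (measurable_fst.comp (measurable_snd.comp measurable_snd))
    · exact h.comp (measurable_fst.comp measurable_snd)
        (measurable_snd.comp (measurable_snd.comp measurable_snd))
  have hsum : ∀ (x y : Fin 2), cov μ (fun ω => ∑ i, a x i ω) (fun ω => ∑ i, b y i ω)
      = ∑ i, cov μ (a x i) (b y i) := fun x y =>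
    cov_sum _ _ (hameas x) (hbmeas y) (har x) (hbr y) (fun i j hij => hcomp i j hij x y)
  have hsite : ∀ i : Fin N, cov μ (a 0 i) (b 0 i) + cov μ (a 0 i) (b 1 i)
      + cov μ (a 1 i) (b 0 i) - cov μ (a 1 i) (b 1 i) ≤ 4/7 := fun i =>
    site _ _ _ _ (hameas 0 i) (hameas 1 i) (hbmeas 0 i) (hbmeas 1 i)
      (har 0 i) (har 1 i) (hbr 0 i) (hbr 1 i)
  have hT : (∑ i, cov μ (a 0 i) (b 0 i)) + (∑ i, cov μ (a 0 i) (b 1 i))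
      + (∑ i, cov μ (a 1 i) (b 0 i)) - (∑ i, cov μ (a 1 i) (b 1 i)) ≤ (N : ℝ) * (4/7) := by
    rw [← Finset.sum_add_distrib, ← Finset.sum_add_distrib, ← Finset.sum_sub_distrib]
    calc (∑ i, (cov μ (a 0 i) (b 0 i) + cov μ (a 0 i) (b 1 i)
            + cov μ (a 1 i) (b 0 i) - cov μ (a 1 i) (b 1 i)))
        ≤ ∑ _i : Fin N, (4/7 : ℝ) := Finset.sum_le_sum fun i _ => hsite i
      _ = (N : ℝ) * (4/7) := by simp [Finset.sum_const, Finset.card_univ, mul_comm]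
  have hNpos : (0:ℝ) < N := by exact_mod_cast Nat.pos_of_ne_zero (by omega)
  rw [bell, hsum 0 0, hsum 0 1, hsum 1 0, hsum 1 1]
  calc (4 / (N:ℝ)) * ((∑ i, cov μ (a 0 i) (b 0 i)) + (∑ i, cov μ (a 0 i) (b 1 i))
        + (∑ i, cov μ (a 1 i) (b 0 i)) - (∑ i, cov μ (a 1 i) (b 1 i)))
      ≤ (4 / (N:ℝ)) * ((N : ℝ) * (4/7)) :=
        mul_le_mul_of_nonneg_left hT (by positivity)
    _ = 16 / 7 := by field_simp; ring
end

section
/- Let N ≥ 1 and ε > 0. For x, y ∈ {0,1}, let A'ₓ, B'_y, r_{Aₓ}, r_{B_y} be real random variables on a probability space with Var(A'ₓ) ≤ N, Var(B'_y) ≤ N, Var(r_{Aₓ}) ≤ εN, and Var(r_{B_y}) ≤ εN. Set Aₓ := A'ₓ + r_{Aₓ} and B_y := B'_y + r_{B_y}. Then |𝓑(A₀,A₁,B₀,B₁) − 𝓑(A'₀,A'₁,B'₀,B'₁)| ≤ 16ε + 32√ε. -/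
open MeasureTheory

/-- The variance of a real random variable, `Var(X) := Cov(X,X)`. -/
noncomputable def var {Ω : Type*} [MeasurableSpace Ω] (μ : Measure Ω) (X : Ω → ℝ) : ℝ :=
  cov μ X X

open RealInnerProductSpace in
theorem abs_integral_mul_le' {Ω : Type*} [MeasurableSpace Ω] {μ : Measure Ω} {X Y : Ω → ℝ}
    (hX : MemLp X 2 μ) (hY : MemLp Y 2 μ) :
    |∫ ω, X ω * Y ω ∂μ| ≤
      Real.sqrt (∫ ω, X ω * X ω ∂μ) * Real.sqrt (∫ ω, Y ω * Y ω ∂μ) := by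
  have key : ∀ (f g : Ω → ℝ) (hf : MemLp f 2 μ) (hg : MemLp g 2 μ),
      (⟪hf.toLp f, hg.toLp g⟫ : ℝ) = ∫ ω, f ω * g ω ∂μ := by
    intro f g hf hg
    rw [L2.inner_def]
    refine integral_congr_ae ?_
    filter_upwards [hf.coeFn_toLp, hg.coeFn_toLp] with ω h1 h2
    simp [h1, h2, RCLike.inner_apply, mul_comm]
  calc |∫ ω, X ω * Y ω ∂μ| = |(⟪hX.toLp X, hY.toLp Y⟫ : ℝ)| := by rw [key X Y hX hY]
    _ ≤ ‖hX.toLp X‖ * ‖hY.toLp Y‖ := abs_real_inner_le_norm _ _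
    _ = _ := by rw [norm_eq_sqrt_real_inner, norm_eq_sqrt_real_inner,
        key X X hX hX, key Y Y hY hY]

theorem memL2_mul_integrable {Ω : Type*} [MeasurableSpace Ω] {μ : Measure Ω} {X Y : Ω → ℝ}
    (hX : MemLp X 2 μ) (hY : MemLp Y 2 μ) :
    Integrable (fun ω => X ω * Y ω) μ := by
  have h : MemLp (X • Y) 1 μ := hY.smul hX
  exact memLp_one_iff_integrable.mp h

section CovLemmas

variable {Ω : Type*} [MeasurableSpace Ω] {μ : Measure Ω} [IsProbabilityMeasure μ]

theorem memL2_center {X : Ω → ℝ} (hX : MemLp X 2 μ) :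
    MemLp (fun ω => X ω - ∫ ω', X ω' ∂μ) 2 μ :=
  hX.sub (memLp_const _)

theorem abs_cov_le' {X Y : Ω → ℝ} (hX : MemLp X 2 μ) (hY : MemLp Y 2 μ) :
    |cov μ X Y| ≤ Real.sqrt (var μ X) * Real.sqrt (var μ Y) :=
  abs_integral_mul_le' (memL2_center hX) (memL2_center hY)

theorem cov_comm' (X Y : Ω → ℝ) : cov μ X Y = cov μ Y X :=
  integral_congr_ae (ae_of_all _ fun _ => mul_comm _ _)

theorem cov_add_left' {X R Y : Ω → ℝ} (hX : MemLp X 2 μ) (hR : MemLp R 2 μ)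
    (hY : MemLp Y 2 μ) :
    cov μ (fun ω => X ω + R ω) Y = cov μ X Y + cov μ R Y := by
  have hE : ∫ ω, (X ω + R ω) ∂μ = (∫ ω, X ω ∂μ) + ∫ ω, R ω ∂μ :=
    integral_add (hX.integrable one_le_two) (hR.integrable one_le_two)
  unfold cov
  rw [← integral_add (memL2_mul_integrable (memL2_center hX) (memL2_center hY))
        (memL2_mul_integrable (memL2_center hR) (memL2_center hY))]
  refine integral_congr_ae (ae_of_all _ fun ω => ?_)
  simp only [hE]
  ring

theorem cov_add_right' {X Y S : Ω → ℝ} (hX : MemLp X 2 μ) (hY : MemLp Y 2 μ)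
    (hS : MemLp S 2 μ) :
    cov μ X (fun ω => Y ω + S ω) = cov μ X Y + cov μ X S := by
  rw [cov_comm' X, cov_add_left' hY hS hX, cov_comm' Y, cov_comm' S]

/-- Bound for a single covariance perturbation. -/
theorem cov_diff_bound {N ε : ℝ} (hNpos : 0 < N) (hε : 0 < ε)
    {A rA B rB : Ω → ℝ}
    (hA : MemLp A 2 μ) (hrA : MemLp rA 2 μ) (hB : MemLp B 2 μ) (hrB : MemLp rB 2 μ)
    (hvA : var μ A ≤ N) (hvrA : var μ rA ≤ ε * N)
    (hvB : var μ B ≤ N) (hvrB : var μ rB ≤ ε * N) :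
    |cov μ (fun ω => A ω + rA ω) (fun ω => B ω + rB ω) - cov μ A B|
      ≤ ε * N + 2 * N * Real.sqrt ε := by
  have hexp : cov μ (fun ω => A ω + rA ω) (fun ω => B ω + rB ω) - cov μ A B
      = cov μ A rB + cov μ rA B + cov μ rA rB := by
    have hT : MemLp (fun ω => B ω + rB ω) 2 μ := hB.add hrB
    rw [cov_add_left' hA hrA hT, cov_add_right' hA hB hrB,
      cov_add_right' hrA hB hrB]
    ring
  have hNε : Real.sqrt N * Real.sqrt (ε * N) = Real.sqrt ε * N := by
    rw [← Real.sqrt_mul hNpos.le, show N * (ε * N) = ε * (N * N) by ring,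
      Real.sqrt_mul hε.le, Real.sqrt_mul_self hNpos.le]
  have bound : ∀ (X Y : Ω → ℝ) (hX : MemLp X 2 μ) (hY : MemLp Y 2 μ)
      (a b : ℝ) (hva : var μ X ≤ a) (hvb : var μ Y ≤ b),
      |cov μ X Y| ≤ Real.sqrt a * Real.sqrt b := fun X Y hX hY a b hva hvb =>
    (abs_cov_le' hX hY).trans
      (mul_le_mul (Real.sqrt_le_sqrt hva) (Real.sqrt_le_sqrt hvb)
        (Real.sqrt_nonneg _) (Real.sqrt_nonneg _))
  have b1 : |cov μ A rB| ≤ Real.sqrt ε * N := by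
    have := bound A rB hA hrB N (ε * N) hvA hvrB
    rwa [hNε] at this
  have b2 : |cov μ rA B| ≤ Real.sqrt ε * N := by
    have := bound rA B hrA hB (ε * N) N hvrA hvB
    rwa [mul_comm, hNε] at this
  have b3 : |cov μ rA rB| ≤ ε * N := by
    have := bound rA rB hrA hrB (ε * N) (ε * N) hvrA hvrB
    rwa [Real.mul_self_sqrt (by positivity)] at this
  have habs : |cov μ A rB + cov μ rA B + cov μ rA rB|
      ≤ |cov μ A rB| + |cov μ rA B| + |cov μ rA rB| := by
    calc |cov μ A rB + cov μ rA B + cov μ rA rB|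
        ≤ |cov μ A rB + cov μ rA B| + |cov μ rA rB| := abs_add_le _ _
      _ ≤ |cov μ A rB| + |cov μ rA B| + |cov μ rA rB| := by
          have := abs_add_le (cov μ A rB) (cov μ rA B); linarith
  rw [hexp]
  linarith

end CovLemmas

/-- Noise perturbation bound for the macroscopic Bell parameter: if each ideal variable
has variance at most `N` and each noise variable has variance at most `εN`, then
`|𝓑(A₀,A₁,B₀,B₁) − 𝓑(A'₀,A'₁,B'₀,B'₁)| ≤ 16ε + 32√ε`. -/
theorem bell_noise_perturbation {Ω : Type*} [MeasurableSpace Ω] (μ : Measure Ω)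
    [IsProbabilityMeasure μ] (N : ℕ) (hN : 1 ≤ N) (ε : ℝ) (hε : 0 < ε)
    (A' B' rA rB : Fin 2 → Ω → ℝ)
    (hA : ∀ x, MemLp (A' x) 2 μ) (hB : ∀ y, MemLp (B' y) 2 μ)
    (hrA : ∀ x, MemLp (rA x) 2 μ) (hrB : ∀ y, MemLp (rB y) 2 μ)
    (hvA : ∀ x, var μ (A' x) ≤ N) (hvB : ∀ y, var μ (B' y) ≤ N)
    (hvrA : ∀ x, var μ (rA x) ≤ ε * N) (hvrB : ∀ y, var μ (rB y) ≤ ε * N) :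
    |bell μ N (fun ω => A' 0 ω + rA 0 ω) (fun ω => A' 1 ω + rA 1 ω)
        (fun ω => B' 0 ω + rB 0 ω) (fun ω => B' 1 ω + rB 1 ω)
      - bell μ N (A' 0) (A' 1) (B' 0) (B' 1)|
      ≤ 16 * ε + 32 * Real.sqrt ε := by
  have hNpos : (0 : ℝ) < N := by exact_mod_cast Nat.lt_of_lt_of_le Nat.zero_lt_one hN
  set D : Fin 2 → Fin 2 → ℝ := fun x y =>
    cov μ (fun ω => A' x ω + rA x ω) (fun ω => B' y ω + rB y ω) - cov μ (A' x) (B' y)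
    with hD
  have hDb : ∀ x y, |D x y| ≤ ε * N + 2 * N * Real.sqrt ε := fun x y =>
    cov_diff_bound hNpos hε (hA x) (hrA x) (hB y) (hrB y)
      (hvA x) (hvrA x) (hvB y) (hvrB y)
  have hdiff : bell μ N (fun ω => A' 0 ω + rA 0 ω) (fun ω => A' 1 ω + rA 1 ω)
        (fun ω => B' 0 ω + rB 0 ω) (fun ω => B' 1 ω + rB 1 ω)
      - bell μ N (A' 0) (A' 1) (B' 0) (B' 1)
      = (4 / N) * (D 0 0 + D 0 1 + D 1 0 - D 1 1) := by
    simp only [hD, bell]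
    ring
  have habs : |D 0 0 + D 0 1 + D 1 0 - D 1 1|
      ≤ |D 0 0| + |D 0 1| + |D 1 0| + |D 1 1| := by
    have h1 := abs_add_le (D 0 0) (D 0 1)
    have h2 := abs_add_le (D 0 0 + D 0 1) (D 1 0)
    have h3 := abs_sub (D 0 0 + D 0 1 + D 1 0) (D 1 1)
    linarith
  have hsum : |D 0 0 + D 0 1 + D 1 0 - D 1 1|
      ≤ 4 * (ε * N + 2 * N * Real.sqrt ε) := by
    have := hDb 0 0; have := hDb 0 1; have := hDb 1 0; have := hDb 1 1
    linarith
  rw [hdiff, abs_mul, abs_of_nonneg (by positivity : (0:ℝ) ≤ 4 / (N:ℝ))]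
  have key : (4 / (N:ℝ)) * (4 * (ε * N + 2 * N * Real.sqrt ε))
      = 16 * ε + 32 * Real.sqrt ε := by
    field_simp
    ring
  calc (4 / (N:ℝ)) * |D 0 0 + D 0 1 + D 1 0 - D 1 1|
      ≤ (4 / (N:ℝ)) * (4 * (ε * N + 2 * N * Real.sqrt ε)) := by
        exact mul_le_mul_of_nonneg_left hsum (by positivity)
    _ = 16 * ε + 32 * Real.sqrt ε := key
end

section
/- Let N ≥ 1 and let (a₀⁽ⁱ⁾, a₁⁽ⁱ⁾, b₀⁽ⁱ⁾, b₁⁽ⁱ⁾) for i = 1,…,N be random 4-tuples on a probability space, each component taking values in [0,1], with the family of tuples indexed by i mutually independent, and such that for every i, Cov(a₀⁽ⁱ⁾,b₀⁽ⁱ⁾) + Cov(a₀⁽ⁱ⁾,b₁⁽ⁱ⁾) + Cov(a₁⁽ⁱ⁾,b₀⁽ⁱ⁾) − Cov(a₁⁽ⁱ⁾,b₁⁽ⁱ⁾) = 1/√2. Define A'ₓ := Σᵢ aₓ⁽ⁱ⁾ and B'_y := Σᵢ b_y⁽ⁱ⁾. Then 𝓑(A'₀, A'₁, B'₀, B'₁)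 = 2√2. -/
/-! Covariance is bilinear, and by independence every cross term `Cov(aₓ⁽ⁱ⁾, b_y⁽ʲ⁾)` with
`i ≠ j` vanishes, so the macroscopic CHSH combination is the sum of the `N` microscopic ones,
`N / √2`, and `𝓑 = (4 / N) · N / √2 = 2√2`. -/

open MeasureTheory ProbabilityTheory

section Independence

variable {Ω : Type*} [MeasurableSpace Ω] {μ : Measure Ω}

theorem covariance_fun_sum_fun_sum_of_indepFun [IsFiniteMeasure μ] {ι : Type*} [Fintype ι]
    {X Y : ι → Ω → ℝ} (hX : ∀ i, MemLp (X i) 2 μ) (hY : ∀ i, MemLp (Y i) 2 μ)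
    (hXY : ∀ i j, i ≠ j → IndepFun (X i) (Y j) μ) :
    covariance (fun ω => ∑ i, X i ω) (fun ω => ∑ i, Y i ω) μ = ∑ i, covariance (X i) (Y i) μ := by
  rw [covariance_fun_sum_fun_sum hX hY]
  refine Finset.sum_congr rfl fun i _ => Finset.sum_eq_single i (fun j _ hji => ?_) (by simp)
  exact (hXY i j hji.symm).covariance_eq_zero (hX i) (hY j)

theorem ProbabilityTheory.iIndepFun.indepFun_of_quadruple {ι : Type*} {a b : Fin 2 → ι → Ω → ℝ}
    (h : iIndepFun (fun i ω => (a 0 i ω, a 1 i ω, b 0 i ω, b 1 i ω)) μ)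
    {i j : ι} (hij : i ≠ j) (x y : Fin 2) : IndepFun (a x i) (b y j) μ := by
  have ha : a x i = (fun t : ℝ × ℝ × ℝ × ℝ => ![t.1, t.2.1] x) ∘
      fun ω => (a 0 i ω, a 1 i ω, b 0 i ω, b 1 i ω) := by
    ext ω; fin_cases x <;> rfl
  have hb : b y j = (fun t : ℝ × ℝ × ℝ × ℝ => ![t.2.2.1, t.2.2.2] y) ∘
      fun ω => (a 0 j ω, a 1 j ω, b 0 j ω, b 1 j ω) := by
    ext ω; fin_cases y <;> rfl
  rw [ha, hb]
  exact (h.indepFun hij).comp (by fun_prop) (by fun_prop)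

end Independence

/-- Ideal quantum violation of the macroscopic Bell inequality: for `N` mutually
independent microscopic 4-tuples of `[0,1]`-valued random variables, each with
CHSH covariance combination `1/√2` (as achieved by a singlet with optimal CHSH
settings), the macroscopic Bell parameter of the summed variables equals `2√2`. -/
theorem macroscopic_bell_quantum_ideal {Ω : Type*} [MeasurableSpace Ω] (μ : Measure Ω)
    [IsProbabilityMeasure μ] (N : ℕ) (hN : 1 ≤ N)
    (a b : Fin 2 → Fin N → Ω → ℝ)
    (hameas : ∀ x i, Measurable (a x i)) (hbmeas : ∀ y i, Measurable (b y i))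
    (har : ∀ x i ω, a x i ω ∈ Set.Icc (0 : ℝ) 1)
    (hbr : ∀ y i ω, b y i ω ∈ Set.Icc (0 : ℝ) 1)
    (hindep : iIndepFun
      (fun i ω => (a 0 i ω, a 1 i ω, b 0 i ω, b 1 i ω)) μ)
    (hcov : ∀ i, cov μ (a 0 i) (b 0 i) + cov μ (a 0 i) (b 1 i)
      + cov μ (a 1 i) (b 0 i) - cov μ (a 1 i) (b 1 i) = 1 / Real.sqrt 2) :
    bell μ N (fun ω => ∑ i, a 0 i ω) (fun ω => ∑ i, a 1 i ω)
      (fun ω => ∑ i, b 0 i ω) (fun ω => ∑ i, b 1 i ω) = 2 * Real.sqrt 2 := by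
  have hasq x i : MemLp (a x i) 2 μ :=
    memLp_of_bounded (.of_forall (har x i)) (hameas x i).aestronglyMeasurable 2
  have hbsq y i : MemLp (b y i) 2 μ :=
    memLp_of_bounded (.of_forall (hbr y i)) (hbmeas y i).aestronglyMeasurable 2
  have hsum x y : cov μ (fun ω => ∑ i, a x i ω) (fun ω => ∑ i, b y i ω)
      = ∑ i, cov μ (a x i) (b y i) :=
    -- `cov μ X Y` unfolds to Mathlib's `covariance X Y μ`
    covariance_fun_sum_fun_sum_of_indepFun (hasq x) (hbsq y)
      fun _ _ hij => hindep.indepFun_of_quadruple hij x y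
  have hN0 : (N : ℝ) ≠ 0 := Nat.cast_ne_zero.mpr (by omega)
  calc bell μ N _ _ _ _
      = 4 / N * ∑ i, (cov μ (a 0 i) (b 0 i) + cov μ (a 0 i) (b 1 i)
          + cov μ (a 1 i) (b 0 i) - cov μ (a 1 i) (b 1 i)) := by
        simp only [bell, hsum, Finset.sum_add_distrib, Finset.sum_sub_distrib]
    _ = 4 / N * (N * (1 / Real.sqrt 2)) := by simp [hcov]
    _ = 2 * Real.sqrt 2 := by
        field_simp
        rw [Real.sq_sqrt zero_le_two]
        norm_num
end

section
/- Let N ≥ 1 and ε > 0. Let A'₀, A'₁, B'₀, B'₁ be real random variables on a probability space with Var(A'ₓ) ≤ N and Var(B'_y) ≤ N for all x, y ∈ {0,1}, and with 𝓑(A'₀,A'₁,B'₀,B'₁) = 2√2. Let r_{Aₓ}, r_{B_y} be random variables with Var(r_{Aₓ}) ≤ εN and Var(r_{B_y}) ≤ εN, and set Aₓ := A'ₓ + r_{Aₓ}, B_y := B'_y + r_{B_y}. Then 𝓑(A₀,A₁,B₀,B₁) ≥ 2√2 − 16ε − 32√ε. -/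
open MeasureTheory

section Aux

variable {Ω : Type*} [MeasurableSpace Ω] {μ : Measure Ω} {f g u v : Ω → ℝ}

lemma integrable_mul' (hf : MemLp f 2 μ) (hg : MemLp g 2 μ) :
    Integrable (fun ω => f ω * g ω) μ := by
  refine Integrable.mono' (((hf.integrable_sq).add (hg.integrable_sq)).div_const 2)
    (hf.aestronglyMeasurable.mul hg.aestronglyMeasurable) ?_
  filter_upwards with ω
  simp only [Pi.add_apply, Real.norm_eq_abs, abs_mul]
  nlinarith [sq_nonneg (|f ω| - |g ω|), sq_abs (f ω), sq_abs (g ω)]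

lemma cauchy' (hf : MemLp f 2 μ) (hg : MemLp g 2 μ) :
    (∫ ω, f ω * g ω ∂μ) ^ 2 ≤ (∫ ω, f ω * f ω ∂μ) * (∫ ω, g ω * g ω ∂μ) := by
  set A := ∫ ω, f ω * f ω ∂μ with hA
  set B := ∫ ω, f ω * g ω ∂μ with hB
  set C := ∫ ω, g ω * g ω ∂μ with hC
  have key : ∀ t : ℝ, 0 ≤ A * (t * t) + (2 * B) * t + C := by
    intro t
    have h1 : Integrable (fun ω => t ^ 2 * (f ω * f ω)) μ :=
      (integrable_mul' hf hf).const_mul _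
    have h2 : Integrable (fun ω => (2 * t) * (f ω * g ω)) μ :=
      (integrable_mul' hf hg).const_mul _
    have h3 : Integrable (fun ω => g ω * g ω) μ := integrable_mul' hg hg
    have h0 : 0 ≤ ∫ ω, (t * f ω + g ω) * (t * f ω + g ω) ∂μ :=
      integral_nonneg fun ω => mul_self_nonneg _
    have heq : (fun ω => (t * f ω + g ω) * (t * f ω + g ω))
        = fun ω => t ^ 2 * (f ω * f ω) + (2 * t) * (f ω * g ω) + g ω * g ω := by
      funext ω; ring
    have e1 := integral_add (h1.add h2) h3
    simp only [Pi.add_apply] at e1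
    rw [heq, e1, integral_add h1 h2, integral_const_mul, integral_const_mul] at h0
    nlinarith [h0]
  have hd := discrim_le_zero key
  rw [discrim] at hd
  nlinarith [hd]

lemma var_nonneg' (f : Ω → ℝ) : 0 ≤ var μ f :=
  integral_nonneg fun ω => mul_self_nonneg _

lemma abs_cov_le [IsFiniteMeasure μ] (hf : MemLp f 2 μ) (hg : MemLp g 2 μ) :
    |cov μ f g| ≤ Real.sqrt (var μ f) * Real.sqrt (var μ g) := by
  have hcf : MemLp (fun ω => f ω - ∫ ω', f ω' ∂μ) 2 μ := hf.sub (memLp_const _)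
  have hcg : MemLp (fun ω => g ω - ∫ ω', g ω' ∂μ) 2 μ := hg.sub (memLp_const _)
  have h := cauchy' hcf hcg
  have h1 : (cov μ f g) ^ 2 ≤ var μ f * var μ g := h
  calc |cov μ f g| = Real.sqrt ((cov μ f g) ^ 2) := (Real.sqrt_sq_eq_abs _).symm
    _ ≤ Real.sqrt (var μ f * var μ g) := Real.sqrt_le_sqrt h1
    _ = Real.sqrt (var μ f) * Real.sqrt (var μ g) := Real.sqrt_mul (var_nonneg' f) _

lemma cov_add_add [IsProbabilityMeasure μ] (hf : MemLp f 2 μ) (hg : MemLp g 2 μ)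
    (hu : MemLp u 2 μ) (hv : MemLp v 2 μ) :
    cov μ (fun ω => f ω + u ω) (fun ω => g ω + v ω)
      = cov μ f g + cov μ f v + cov μ u g + cov μ u v := by
  have hfi := hf.integrable one_le_two
  have hgi := hg.integrable one_le_two
  have hui := hu.integrable one_le_two
  have hvi := hv.integrable one_le_two
  have hcf : MemLp (fun ω => f ω - ∫ ω', f ω' ∂μ) 2 μ := hf.sub (memLp_const _)
  have hcg : MemLp (fun ω => g ω - ∫ ω', g ω' ∂μ) 2 μ := hg.sub (memLp_const _)
  have hcu : MemLp (fun ω => u ω - ∫ ω', u ω' ∂μ) 2 μ := hu.sub (memLp_const _)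
  have hcv : MemLp (fun ω => v ω - ∫ ω', v ω' ∂μ) 2 μ := hv.sub (memLp_const _)
  have h1 := integrable_mul' hcf hcg
  have h2 := integrable_mul' hcf hcv
  have h3 := integrable_mul' hcu hcg
  have h4 := integrable_mul' hcu hcv
  unfold cov
  rw [integral_add hfi hui, integral_add hgi hvi]
  have heq : (fun ω => (f ω + u ω - ((∫ ω', f ω' ∂μ) + ∫ ω', u ω' ∂μ))
        * (g ω + v ω - ((∫ ω', g ω' ∂μ) + ∫ ω', v ω' ∂μ)))
      = fun ω => (f ω - ∫ ω', f ω' ∂μ) * (g ω - ∫ ω', g ω' ∂μ)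
        + (f ω - ∫ ω', f ω' ∂μ) * (v ω - ∫ ω', v ω' ∂μ)
        + (u ω - ∫ ω', u ω' ∂μ) * (g ω - ∫ ω', g ω' ∂μ)
        + (u ω - ∫ ω', u ω' ∂μ) * (v ω - ∫ ω', v ω' ∂μ) := by
    funext ω; ring
  have e1 := integral_add ((h1.add h2).add h3) h4
  simp only [Pi.add_apply] at e1
  have e2 := integral_add (h1.add h2) h3
  simp only [Pi.add_apply] at e2
  rw [heq, e1, e2, integral_add h1 h2]

end Aux

/-- A quantum violation of the macroscopic Bell inequality survives noise: if the ideal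
variables have variance at most `N` and achieve `𝓑 = 2√2`, and the noise variables have
variance at most `εN`, then the noisy variables satisfy `𝓑 ≥ 2√2 − 16ε − 32√ε`. -/
theorem macroscopic_bell_quantum_noisy {Ω : Type*} [MeasurableSpace Ω] (μ : Measure Ω)
    [IsProbabilityMeasure μ] (N : ℕ) (hN : 1 ≤ N) (ε : ℝ) (hε : 0 < ε)
    (A' B' rA rB : Fin 2 → Ω → ℝ)
    (hA : ∀ x, MemLp (A' x) 2 μ) (hB : ∀ y, MemLp (B' y) 2 μ)
    (hrA : ∀ x, MemLp (rA x) 2 μ) (hrB : ∀ y, MemLp (rB y) 2 μ)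
    (hvA : ∀ x, var μ (A' x) ≤ N) (hvB : ∀ y, var μ (B' y) ≤ N)
    (hideal : bell μ N (A' 0) (A' 1) (B' 0) (B' 1) = 2 * Real.sqrt 2)
    (hvrA : ∀ x, var μ (rA x) ≤ ε * N) (hvrB : ∀ y, var μ (rB y) ≤ ε * N) :
    bell μ N (fun ω => A' 0 ω + rA 0 ω) (fun ω => A' 1 ω + rA 1 ω)
        (fun ω => B' 0 ω + rB 0 ω) (fun ω => B' 1 ω + rB 1 ω)
      ≥ 2 * Real.sqrt 2 - 16 * ε - 32 * Real.sqrt ε := by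
  have hN0 : (0:ℝ) < (N:ℝ) := by exact_mod_cast Nat.lt_of_lt_of_le Nat.zero_lt_one hN
  set sε := Real.sqrt ε with hsε
  have hsε0 : 0 ≤ sε := Real.sqrt_nonneg ε
  -- bounds on cross covariances
  have hsqN : Real.sqrt (N:ℝ) * Real.sqrt (ε * N) = (N:ℝ) * sε := by
    rw [Real.sqrt_mul hε.le, hsε]
    rw [show Real.sqrt (N:ℝ) * (sε * Real.sqrt (N:ℝ)) = sε * (Real.sqrt (N:ℝ) * Real.sqrt (N:ℝ)) by ring,
      Real.mul_self_sqrt hN0.le]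
    ring
  have hsqεN : Real.sqrt (ε * N) * Real.sqrt (ε * N) = ε * N :=
    Real.mul_self_sqrt (by positivity)
  have bound1 : ∀ x y, |cov μ (A' x) (rB y)| ≤ (N:ℝ) * sε := by
    intro x y
    calc |cov μ (A' x) (rB y)| ≤ Real.sqrt (var μ (A' x)) * Real.sqrt (var μ (rB y)) :=
          abs_cov_le (hA x) (hrB y)
      _ ≤ Real.sqrt (N:ℝ) * Real.sqrt (ε * N) :=
          mul_le_mul (Real.sqrt_le_sqrt (hvA x)) (Real.sqrt_le_sqrt (hvrB y))
            (Real.sqrt_nonneg _) (Real.sqrt_nonneg _)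
      _ = (N:ℝ) * sε := hsqN
  have bound2 : ∀ x y, |cov μ (rA x) (B' y)| ≤ (N:ℝ) * sε := by
    intro x y
    calc |cov μ (rA x) (B' y)| ≤ Real.sqrt (var μ (rA x)) * Real.sqrt (var μ (B' y)) :=
          abs_cov_le (hrA x) (hB y)
      _ ≤ Real.sqrt (ε * N) * Real.sqrt (N:ℝ) :=
          mul_le_mul (Real.sqrt_le_sqrt (hvrA x)) (Real.sqrt_le_sqrt (hvB y))
            (Real.sqrt_nonneg _) (Real.sqrt_nonneg _)
      _ = (N:ℝ) * sε := by rw [mul_comm]; exact hsqN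
  have bound3 : ∀ x y, |cov μ (rA x) (rB y)| ≤ ε * N := by
    intro x y
    calc |cov μ (rA x) (rB y)| ≤ Real.sqrt (var μ (rA x)) * Real.sqrt (var μ (rB y)) :=
          abs_cov_le (hrA x) (hrB y)
      _ ≤ Real.sqrt (ε * N) * Real.sqrt (ε * N) :=
          mul_le_mul (Real.sqrt_le_sqrt (hvrA x)) (Real.sqrt_le_sqrt (hvrB y))
            (Real.sqrt_nonneg _) (Real.sqrt_nonneg _)
      _ = ε * N := hsqεN
  -- expand covariances
  have hexp : ∀ x y, cov μ (fun ω => A' x ω + rA x ω) (fun ω => B' y ω + rB y ω)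
      = cov μ (A' x) (B' y) + (cov μ (A' x) (rB y) + cov μ (rA x) (B' y)
        + cov μ (rA x) (rB y)) := by
    intro x y
    rw [cov_add_add (hA x) (hB y) (hrA x) (hrB y)]; ring
  set E : Fin 2 → Fin 2 → ℝ := fun x y => cov μ (A' x) (rB y) + cov μ (rA x) (B' y)
    + cov μ (rA x) (rB y) with hE
  have hEb : ∀ x y, |E x y| ≤ 2 * ((N:ℝ) * sε) + ε * N := by
    intro x y
    calc |E x y| ≤ |cov μ (A' x) (rB y)| + |cov μ (rA x) (B' y)| + |cov μ (rA x) (rB y)| :=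
          (abs_add_le _ _).trans (by gcongr; exact abs_add_le _ _)
      _ ≤ 2 * ((N:ℝ) * sε) + ε * N := by
          have := bound1 x y; have := bound2 x y; have := bound3 x y; linarith
  have hEsum : E 0 0 + E 0 1 + E 1 0 - E 1 1 ≥ -(8 * ((N:ℝ) * sε) + 4 * (ε * N)) := by
    have h00 := hEb 0 0; have h01 := hEb 0 1; have h10 := hEb 1 0; have h11 := hEb 1 1
    have := abs_le.mp h00; have := abs_le.mp h01
    have := abs_le.mp h10; have := abs_le.mp h11
    cases abs_le.mp h00; cases abs_le.mp h01; cases abs_le.mp h10; cases abs_le.mp h11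
    linarith
  have hbell : bell μ N (fun ω => A' 0 ω + rA 0 ω) (fun ω => A' 1 ω + rA 1 ω)
      (fun ω => B' 0 ω + rB 0 ω) (fun ω => B' 1 ω + rB 1 ω)
      = bell μ N (A' 0) (A' 1) (B' 0) (B' 1)
        + (4 / (N:ℝ)) * (E 0 0 + E 0 1 + E 1 0 - E 1 1) := by
    unfold bell
    rw [hexp 0 0, hexp 0 1, hexp 1 0, hexp 1 1]
    simp only [hE]; ring
  rw [hbell, hideal]
  have hfrac : (4 / (N:ℝ)) * (E 0 0 + E 0 1 + E 1 0 - E 1 1)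
      ≥ (4 / (N:ℝ)) * (-(8 * ((N:ℝ) * sε) + 4 * (ε * N))) := by
    apply mul_le_mul_of_nonneg_left hEsum (by positivity)
  have heq2 : (4 / (N:ℝ)) * (-(8 * ((N:ℝ) * sε) + 4 * (ε * N))) = -(32 * sε + 16 * ε) := by
    field_simp; ring
  rw [heq2] at hfrac
  linarith
end

section
/- Let (Ω, P) be a probability space and let a, b : Fin 2 → Ω → ZMod 2 be measurable functions (a shared-randomness classical strategy for the CHSH game). Then (1/4) Σ_{x,y ∈ {0,1}} P[{ω : a x ω + b y ω = x·y}] ≤ 3/4. In particular, no deterministic assignment a₀, a₁, b₀, b₁ ∈ ZMod 2 satisfies a₀+b₀ = 0, a₁+b₀ = 0, a₀+b₁ = 0, and a₁+b₁ = 1 simultaneously. -/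
/-!
The four winning conditions of a deterministic strategy cannot hold together: adding them up, each
answer occurs twice, so the left-hand sides sum to `0` in `ZMod 2`, while the right-hand sides sum
to `∑ x·y = 1`. Hence for every seed at least one of the four events "the players win on questions
`(x, y)`" fails. Events with empty intersection have complements covering the space, so `n` of them
have total probability at most `n - 1`; here `4 - 1 = 3`.
-/

open MeasureTheory

theorem sum_measureReal_le_card_sub_one_of_iInter_eq_empty {Ω ι : Type*} [MeasurableSpace Ω]
    [Fintype ι] (μ : Measure Ω) [IsProbabilityMeasure μ] {s : ι → Set Ω}
    (hs : ∀ i, MeasurableSet (s i)) (h : ⋂ i, s i = ∅) :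
    ∑ i, μ.real (s i) ≤ Fintype.card ι - 1 := by
  have hcover : ⋃ i, (s i)ᶜ = Set.univ := by
    rw [← Set.compl_iInter, h, Set.compl_empty]
  calc ∑ i, μ.real (s i) = Fintype.card ι - ∑ i, μ.real (s i)ᶜ := by
        simp [measureReal_compl (hs _), Finset.sum_sub_distrib]
    _ ≤ Fintype.card ι - μ.real (⋃ i, (s i)ᶜ) := by
        gcongr
        exact measureReal_iUnion_fintype_le _
    _ = Fintype.card ι - 1 := by rw [hcover, probReal_univ]

theorem measurableSet_setOf_add_eq {Ω M : Type*} [MeasurableSpace Ω] [Add M] [Countable M]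
    {f g : Ω → M} (hf : @Measurable Ω M _ ⊤ f) (hg : @Measurable Ω M _ ⊤ g) (c : M) :
    MeasurableSet {ω | f ω + g ω = c} :=
  letI : MeasurableSpace M := ⊤
  (hf.add hg) (t := {c}) trivial

theorem chsh_not_all_win (a₀ a₁ b₀ b₁ : ZMod 2) :
    ¬ (a₀ + b₀ = 0 ∧ a₁ + b₀ = 0 ∧ a₀ + b₁ = 0 ∧ a₁ + b₁ = 1) := by
  rintro ⟨h₀₀, h₁₀, h₀₁, h₁₁⟩
  have : (1 : ZMod 2) = 0 := by
    linear_combination (norm := (ring_nf; reduce_mod_char)) h₁₁ - h₀₀ + h₁₀ + h₀₁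
  exact one_ne_zero this

theorem chsh_not_forall_win (a b : Fin 2 → ZMod 2) :
    ¬ ∀ x y : Fin 2, a x + b y = ((x.val * y.val : ℕ) : ZMod 2) := fun h ↦
  chsh_not_all_win (a 0) (a 1) (b 0) (b 1) ⟨by simpa using h 0 0, by simpa using h 1 0,
    by simpa using h 0 1, by simpa using h 1 1⟩

/-- **Classical bound on the CHSH game.** Any shared-randomness classical strategy,
given by measurable response functions `a b : Fin 2 → Ω → ZMod 2` on a probability
space, wins the CHSH game with probability at most `3/4`; in particular, no
deterministic assignment satisfies all four CHSH win conditions simultaneously. -/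
theorem chsh_classical_value {Ω : Type*} [MeasurableSpace Ω] (μ : Measure Ω)
    [IsProbabilityMeasure μ] (a b : Fin 2 → Ω → ZMod 2)
    (ha : ∀ x, @Measurable Ω (ZMod 2) _ ⊤ (a x))
    (hb : ∀ y, @Measurable Ω (ZMod 2) _ ⊤ (b y)) :
    ((1 : ℝ) / 4) * ∑ x : Fin 2, ∑ y : Fin 2,
        (μ {ω | a x ω + b y ω = ((x.val * y.val : ℕ) : ZMod 2)}).toReal ≤ 3 / 4
      ∧ ¬ ∃ a₀ a₁ b₀ b₁ : ZMod 2,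
          a₀ + b₀ = 0 ∧ a₁ + b₀ = 0 ∧ a₀ + b₁ = 0 ∧ a₁ + b₁ = 1 := by
  refine ⟨?_, fun ⟨a₀, a₁, b₀, b₁, h⟩ ↦ chsh_not_all_win a₀ a₁ b₀ b₁ h⟩
  let win : Fin 2 × Fin 2 → Set Ω := fun q ↦
    {ω | a q.1 ω + b q.2 ω = ((q.1.val * q.2.val : ℕ) : ZMod 2)}
  have never_all_win : ⋂ q, win q = ∅ :=
    Set.eq_empty_of_forall_notMem fun ω hω ↦
      chsh_not_forall_win (a · ω) (b · ω) fun x y ↦ Set.mem_iInter.1 hω (x, y)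
  have hsum := sum_measureReal_le_card_sub_one_of_iInter_eq_empty μ
    (fun q : Fin 2 × Fin 2 ↦ measurableSet_setOf_add_eq (ha q.1) (hb q.2) _) never_all_win
  simp only [Fintype.sum_prod_type, Fintype.card_prod, Fintype.card_fin, measureReal_def] at hsum
  norm_num at hsum ⊢
  linarith
end

section
/- Let R_z(θ) := diag(e^{−iθ/2}, e^{iθ/2}), |Ψ⁻⟩ := (1/√2)(|01⟩ − |10⟩) ∈ ℂ² ⊗ ℂ², |+⟩ := (1/√2)(|0⟩+|1⟩), |−⟩ := (1/√2)(|0⟩−|1⟩), and set θ₀ := −3π/8 and θ₁ := 9π/8. For x, y ∈ {0,1} define |ψ_{xy}⟩ := (R_z(θ_x) ⊗ R_z(−θ_y))|Ψ⁻⟩ and p_even(x,y) := |⟨++|ψ_{xy}⟩|² + |⟨−−|ψ_{xy}⟩|². Then p_even(0,0) = p_even(0,1) = p_even(1,0) = sin²(3π/8), and 1 − p_even(1,1) = sin²(3π/8); hence the quantum CHSH strategy with these rotation angles wins with probability (1/4)[p_even(0,0) + p_even(0,1) + p_even(1,0) + (1 − p_even(1,1))] = sin²(3π/8). -/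
open Matrix Complex Real

/-- The single-qubit rotation about the z-axis: `R_z(θ) = diag(e^{−iθ/2}, e^{iθ/2})`. -/
noncomputable def Rz (θ : ℝ) : Matrix (Fin 2) (Fin 2) ℂ :=
  Matrix.diagonal ![Complex.exp (-(θ : ℂ) / 2 * Complex.I),
    Complex.exp ((θ : ℂ) / 2 * Complex.I)]

/-- The tensor (Kronecker) product of two single-qubit operators. -/
noncomputable def tensorOp (P Q : Matrix (Fin 2) (Fin 2) ℂ) :
    Matrix (Fin 2 × Fin 2) (Fin 2 × Fin 2) ℂ :=
  Matrix.of fun p q => P p.1 q.1 * Q p.2 q.2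

/-- The standard basis vector `|01⟩`. -/
def ket01 : Fin 2 × Fin 2 → ℂ := fun p => if p = (0, 1) then 1 else 0

/-- The standard basis vector `|10⟩`. -/
def ket10 : Fin 2 × Fin 2 → ℂ := fun p => if p = (1, 0) then 1 else 0

/-- The singlet `|Ψ⁻⟩ := (1/√2)(|01⟩ − |10⟩)`. -/
noncomputable def psiMinus : Fin 2 × Fin 2 → ℂ :=
  fun p => (1 / (Real.sqrt 2 : ℂ)) * (ket01 p - ket10 p)

/-- The single-qubit state `|+⟩`. -/
noncomputable def ketPlus : Fin 2 → ℂ := fun _ => 1 / (Real.sqrt 2 : ℂ)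

/-- The single-qubit state `|−⟩`. -/
noncomputable def ketMinus : Fin 2 → ℂ :=
  fun i => if i = 0 then 1 / (Real.sqrt 2 : ℂ) else -(1 / (Real.sqrt 2 : ℂ))

/-- The product state `|++⟩`. -/
noncomputable def ketPP : Fin 2 × Fin 2 → ℂ := fun p => ketPlus p.1 * ketPlus p.2

/-- The product state `|−−⟩`. -/
noncomputable def ketMM : Fin 2 × Fin 2 → ℂ := fun p => ketMinus p.1 * ketMinus p.2

/-- The standard Hermitian inner product on `ℂ² ⊗ ℂ²`. -/
noncomputable def inner2 (φ ψ : Fin 2 × Fin 2 → ℂ) : ℂ :=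
  ∑ p : Fin 2 × Fin 2, (starRingEnd ℂ) (φ p) * ψ p

/-- The CHSH rotation angles `θ₀ = −3π/8`, `θ₁ = 9π/8`. -/
noncomputable def chshAngle : Fin 2 → ℝ := ![-3 * π / 8, 9 * π / 8]

/-- The state after Alice rotates by `θ_x` and Bob by `−θ_y`:
`|ψ_{xy}⟩ := (R_z(θ_x) ⊗ R_z(−θ_y))|Ψ⁻⟩`. -/
noncomputable def psiXY (x y : Fin 2) : Fin 2 × Fin 2 → ℂ :=
  (tensorOp (Rz (chshAngle x)) (Rz (-(chshAngle y)))).mulVec psiMinus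

/-- The probability that measuring `σ_x ⊗ σ_x` on `|ψ_{xy}⟩` yields equal outcomes:
`p_even(x,y) := |⟨++|ψ_{xy}⟩|² + |⟨−−|ψ_{xy}⟩|²`. -/
noncomputable def pEven (x y : Fin 2) : ℝ :=
  ‖inner2 ketPP (psiXY x y)‖ ^ 2 + ‖inner2 ketMM (psiXY x y)‖ ^ 2

private lemma innerPP_eq (a b : ℝ) :
    inner2 ketPP ((tensorOp (Rz a) (Rz b)).mulVec psiMinus)
      = -(Complex.I * Real.sin ((a - b)/2)) / Real.sqrt 2 := by
  simp only [inner2, psiMinus, tensorOp, Rz, ketPP, ketPlus, ket01, ket10,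
    Matrix.mulVec, dotProduct, Fintype.sum_prod_type, Fin.sum_univ_two,
    Matrix.of_apply, Matrix.diagonal_apply, Matrix.cons_val', Matrix.cons_val_zero,
    Matrix.cons_val_one, Matrix.head_cons]
  norm_num [Prod.ext_iff]
  rw [Complex.sin, ← Complex.exp_add, ← Complex.exp_add]
  rw [show -↑a / 2 * Complex.I + ↑b / 2 * Complex.I = -((↑a - ↑b)/2) * Complex.I by ring,
      show ↑a / 2 * Complex.I + -↑b / 2 * Complex.I = (↑a - ↑b)/2 * Complex.I by ring]
  have hs : ((Real.sqrt 2 : ℝ) : ℂ) * ((Real.sqrt 2 : ℝ) : ℂ) = 2 := by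
    norm_cast
    exact Real.mul_self_sqrt (by norm_num)
  have hs0 : ((Real.sqrt 2 : ℝ) : ℂ) ≠ 0 := by
    simp [Real.sqrt_ne_zero'.mpr (by norm_num : (0:ℝ) < 2)]
  field_simp
  ring_nf
  simp only [Complex.I_sq]
  linear_combination (Complex.exp (↑a * Complex.I * (1 / 2) + ↑b * Complex.I * (-1 / 2)) - Complex.exp (↑a * Complex.I * (-1 / 2) + ↑b * Complex.I * (1 / 2))) * hs

private lemma innerMM_eq (a b : ℝ) :
    inner2 ketMM ((tensorOp (Rz a) (Rz b)).mulVec psiMinus)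
      = (Complex.I * Real.sin ((a - b)/2)) / Real.sqrt 2 := by
  simp only [inner2, psiMinus, tensorOp, Rz, ketMM, ketMinus, ket01, ket10,
    Matrix.mulVec, dotProduct, Fintype.sum_prod_type, Fin.sum_univ_two,
    Matrix.of_apply, Matrix.diagonal_apply, Matrix.cons_val', Matrix.cons_val_zero,
    Matrix.cons_val_one, Matrix.head_cons]
  norm_num [Prod.ext_iff]
  rw [Complex.sin, ← Complex.exp_add, ← Complex.exp_add]
  rw [show -↑a / 2 * Complex.I + ↑b / 2 * Complex.I = -((↑a - ↑b)/2) * Complex.I by ring,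
      show ↑a / 2 * Complex.I + -↑b / 2 * Complex.I = (↑a - ↑b)/2 * Complex.I by ring]
  have hs : ((Real.sqrt 2 : ℝ) : ℂ) * ((Real.sqrt 2 : ℝ) : ℂ) = 2 := by
    norm_cast
    exact Real.mul_self_sqrt (by norm_num)
  have hs0 : ((Real.sqrt 2 : ℝ) : ℂ) ≠ 0 := by
    simp [Real.sqrt_ne_zero'.mpr (by norm_num : (0:ℝ) < 2)]
  field_simp
  ring_nf
  simp only [Complex.I_sq]
  linear_combination (Complex.exp (↑a * Complex.I * (-1 / 2) + ↑b * Complex.I * (1 / 2)) - Complex.exp (↑a * Complex.I * (1 / 2) + ↑b * Complex.I * (-1 / 2))) * hs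

private lemma pEven_eq (x y : Fin 2) :
    pEven x y = Real.sin ((chshAngle x + chshAngle y) / 2) ^ 2 := by
  unfold pEven psiXY
  rw [innerPP_eq, innerMM_eq]
  have habs : ∀ s : ℝ, ‖(Complex.I * (s:ℂ)) / Real.sqrt 2‖ = |s| / Real.sqrt 2 := by
    intro s
    rw [norm_div, norm_mul, Complex.norm_I, Complex.norm_real, Complex.norm_real,
      one_mul, Real.norm_eq_abs, Real.norm_eq_abs, _root_.abs_of_nonneg (Real.sqrt_nonneg 2)]
  rw [neg_div, norm_neg, habs]
  have hsq : (Real.sqrt 2) ^ 2 = 2 := Real.sq_sqrt (by norm_num)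
  rw [div_pow, _root_.sq_abs, hsq, show chshAngle x - -chshAngle y = chshAngle x + chshAngle y by ring]
  ring

private lemma angle0 : chshAngle 0 = -3 * π / 8 := rfl
private lemma angle1 : chshAngle 1 = 9 * π / 8 := rfl

/-- The quantum CHSH strategy with rotation angles `θ₀ = −3π/8`, `θ₁ = 9π/8` wins on
each question pair with probability `sin²(3π/8)`, hence wins the CHSH game with overall
probability `sin²(3π/8)`. -/
theorem chsh_quantum_value :
    pEven 0 0 = Real.sin (3 * π / 8) ^ 2
      ∧ pEven 0 1 = Real.sin (3 * π / 8) ^ 2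
      ∧ pEven 1 0 = Real.sin (3 * π / 8) ^ 2
      ∧ 1 - pEven 1 1 = Real.sin (3 * π / 8) ^ 2
      ∧ (1 / 4) * (pEven 0 0 + pEven 0 1 + pEven 1 0 + (1 - pEven 1 1))
          = Real.sin (3 * π / 8) ^ 2 := by
  have e00 : pEven 0 0 = Real.sin (3 * π / 8) ^ 2 := by
    rw [pEven_eq, show (chshAngle 0 + chshAngle 0) / 2 = -(3 * π / 8) by rw [angle0]; ring,
      Real.sin_neg, neg_sq]
  have e01 : pEven 0 1 = Real.sin (3 * π / 8) ^ 2 := by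
    rw [pEven_eq, show (chshAngle 0 + chshAngle 1) / 2 = 3 * π / 8 by rw [angle0, angle1]; ring]
  have e10 : pEven 1 0 = Real.sin (3 * π / 8) ^ 2 := by
    rw [pEven_eq, show (chshAngle 1 + chshAngle 0) / 2 = 3 * π / 8 by rw [angle0, angle1]; ring]
  have e11 : 1 - pEven 1 1 = Real.sin (3 * π / 8) ^ 2 := by
    rw [pEven_eq, show (chshAngle 1 + chshAngle 1) / 2 = π / 8 + π by rw [angle1]; ring,
      Real.sin_add_pi, neg_sq,
      show Real.sin (3 * π / 8) = Real.cos (π / 8) by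
        rw [show 3 * π / 8 = π / 2 - π / 8 by ring, Real.sin_pi_div_two_sub]]
    nlinarith [Real.sin_sq_add_cos_sq (π / 8)]
  exact ⟨e00, e01, e10, e11, by rw [e00, e01, e10, e11]; ring⟩
end

section
/- Let N ≥ 1 and let Z be a random variable on a probability space with P(Z = 1) = P(Z = 0) = 1/2. Define C₀ = C₁ = D₀ = D₁ := N·Z. Then Cov(Cₓ, D_y) = N²/4 for all x, y ∈ {0,1}, and consequently 𝓑(C₀, C₁, D₀, D₁) = 2N. -/
open MeasureTheory

/-- Global classical correlations violate the macroscopic Bell inequality: if `Z` is an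
unbiased coin (`P(Z=1) = P(Z=0) = 1/2`) and `C₀ = C₁ = D₀ = D₁ := N·Z`, then every
covariance `Cov(Cₓ, D_y)` equals `N²/4`, and `𝓑(C₀,C₁,D₀,D₁) = 2N`. -/
theorem global_correlations_bell_value {Ω : Type*} [MeasurableSpace Ω] (μ : Measure Ω)
    [IsProbabilityMeasure μ] (N : ℕ) (hN : 1 ≤ N) (Z : Ω → ℝ) (hZ : Measurable Z)
    (h1 : μ {ω | Z ω = 1} = 1 / 2) (h0 : μ {ω | Z ω = 0} = 1 / 2) :
    cov μ (fun ω => (N : ℝ) * Z ω) (fun ω => (N : ℝ) * Z ω) = (N : ℝ) ^ 2 / 4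
      ∧ bell μ N (fun ω => (N : ℝ) * Z ω) (fun ω => (N : ℝ) * Z ω)
          (fun ω => (N : ℝ) * Z ω) (fun ω => (N : ℝ) * Z ω) = 2 * N := by
  have hA : MeasurableSet {ω | Z ω = 1} := hZ (measurableSet_singleton 1)
  have hB : MeasurableSet {ω | Z ω = 0} := hZ (measurableSet_singleton 0)
  have hdisj : Disjoint {ω | Z ω = 1} {ω | Z ω = 0} := by
    rw [Set.disjoint_left]
    rintro ω hx hy
    simp only [Set.mem_setOf_eq] at hx hy
    rw [hx] at hy; norm_num at hy
  have hunion : μ ({ω | Z ω = 1} ∪ {ω | Z ω = 0}) = 1 := by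
    rw [measure_union hdisj hB, h1, h0, one_div, ENNReal.inv_two_add_inv_two]
  have hcompl : μ ({ω | Z ω = 1} ∪ {ω | Z ω = 0})ᶜ = 0 := by
    rw [measure_compl (hA.union hB) (measure_ne_top _ _), hunion, measure_univ, tsub_self]
  have hae : ∀ᵐ ω ∂μ, Z ω = 1 ∨ Z ω = 0 := by
    have hset : {ω | ¬(Z ω = 1 ∨ Z ω = 0)} = ({ω | Z ω = 1} ∪ {ω | Z ω = 0})ᶜ := by
      ext ω; simp [not_or]
    rw [ae_iff, hset]
    exact hcompl
  have hZae : Z =ᵐ[μ] Set.indicator {ω | Z ω = 1} (fun _ => (1 : ℝ)) := by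
    filter_upwards [hae] with ω h
    rcases h with h | h
    · simp [Set.indicator_apply, Set.mem_setOf_eq, h]
    · have : ω ∉ {ω | Z ω = 1} := by simp [Set.mem_setOf_eq, h]
      simp [Set.indicator_of_notMem this, h]
  have hint : ∫ ω, Z ω ∂μ = 1 / 2 := by
    rw [integral_congr_ae hZae, integral_indicator hA, setIntegral_const, measureReal_def, h1, smul_eq_mul,
      mul_one]
    simp [ENNReal.toReal_div]
  have hm : ∫ ω', (N : ℝ) * Z ω' ∂μ = (N : ℝ) / 2 := by
    rw [integral_const_mul, hint]; ring
  have hcov : cov μ (fun ω => (N : ℝ) * Z ω) (fun ω => (N : ℝ) * Z ω) = (N : ℝ) ^ 2 / 4 := by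
    unfold cov
    rw [hm]
    have heq : (fun ω => ((N : ℝ) * Z ω - (N : ℝ) / 2) * ((N : ℝ) * Z ω - (N : ℝ) / 2))
        =ᵐ[μ] fun _ => (N : ℝ) ^ 2 / 4 := by
      filter_upwards [hae] with ω h
      rcases h with h | h <;> rw [h] <;> ring
    rw [integral_congr_ae heq, integral_const, measureReal_def, measure_univ]
    simp
  refine ⟨hcov, ?_⟩
  unfold bell
  rw [hcov]
  have hN0 : (N : ℝ) ≠ 0 := by
    have : (1 : ℝ) ≤ (N : ℝ) := by exact_mod_cast hN
    linarith
  field_simp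
  ring
end
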